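/- arXiv:1807.05202 — 8 statements merged into one kernel-verified Lean document; each statement's English description precedes it below -/
import Mathlib

section
/- Let $f : \{0,1\}^n \to \mathbb{R}$ satisfy $|f(x_1,\dots,x_{i-1},0,x_{i+1},\dots,x_n) - f(x_1,\dots,x_{i-1},1,x_{i+1},\dots,x_n)| \le c_i$ for all $x \in \{0,1\}^n$ and all $i \in [n]$. Let $\xi$ be a uniformly random element of the set of vectors in $\{0,1\}^n$ with exactly $k$ ones. Then for every $t \ge 0$, $\Pr(f(\xi) - \mathbb{E} f(\xi) \ge t) \le \exp\left(-t^2 / (8 \sum_{i=1}^n c_i^2)\right)$. -/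
/-!
Condition on the free coordinate `i` with the largest `c i`: the slice splits into the two
smaller slices `x i = 0` and `x i = 1`. Swapping `x i` with a one of `x` couples the two halves,
so their means differ by at most `2 c i`, and the two-point Hoeffding bound multiplies the
centred moment generating function by at most `exp (2 λ² c i²)`. By induction on the set of free
coordinates the moment generating function is at most `exp (2 λ² ∑ c i²)`, and Chernoff's bound
with `λ = t / (4 ∑ c i²)` gives the tail estimate.
-/

open Finset Real Function
open scoped BigOperators

lemma exp_le_cosh_add_mul_sinh_div {u L : ℝ} (h : |u| ≤ L) :
    exp u ≤ cosh L + u * (sinh L / L) := by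
  obtain hL | hL := (abs_nonneg u).trans h |>.eq_or_lt
  · obtain rfl : u = 0 := abs_nonpos_iff.mp (hL ▸ h)
    simp [← hL]
  rw [abs_le] at h
  have hw : 0 ≤ (L + u) / (2 * L) := by apply div_nonneg <;> linarith
  have hw' : 0 ≤ (L - u) / (2 * L) := by apply div_nonneg <;> linarith
  have hconv := convexOn_exp.2 (Set.mem_univ L) (Set.mem_univ (-L)) hw hw'
    (by field_simp; ring)
  have hu : ((L + u) / (2 * L)) • L + ((L - u) / (2 * L)) • -L = u := by
    simp only [smul_eq_mul]; field_simp; ring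
  rw [hu] at hconv
  refine hconv.trans_eq ?_
  rw [cosh_eq, sinh_eq, smul_eq_mul, smul_eq_mul]; field_simp; ring

lemma mul_exp_add_mul_exp_le {a b u v L : ℝ} (ha : 0 ≤ a) (hb : 0 ≤ b)
    (hbal : a * u + b * v = 0) (hu : |u| ≤ L) (hv : |v| ≤ L) :
    a * exp u + b * exp v ≤ (a + b) * exp (L ^ 2 / 2) :=
  calc a * exp u + b * exp v
      ≤ a * (cosh L + u * (sinh L / L)) + b * (cosh L + v * (sinh L / L)) := by
        gcongr <;> exact exp_le_cosh_add_mul_sinh_div ‹_›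
    _ = (a + b) * cosh L := by linear_combination (sinh L / L) * hbal
    _ ≤ (a + b) * exp (L ^ 2 / 2) := by gcongr; exact cosh_le_exp_half_sq L

section Expect

variable {α : Type*}

/-- `#S` times the moment generating function of `f - 𝔼 f` under the uniform distribution on `S`. -/
noncomputable def centeredExpSum (S : Finset α) (f : α → ℝ) (l : ℝ) : ℝ :=
  ∑ x ∈ S, exp (l * (f x - 𝔼 y ∈ S, f y))

lemma card_union_mul_expect [DecidableEq α] {A B : Finset α} (hAB : Disjoint A B) (f : α → ℝ) :
    (#(A ∪ B) : ℝ) * 𝔼 x ∈ A ∪ B, f x = #A * 𝔼 x ∈ A, f x + #B * 𝔼 x ∈ B, f x := by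
  rw [card_mul_expect, card_mul_expect, card_mul_expect, sum_union hAB]

lemma abs_expect_sub_expect_union_le [DecidableEq α] {A B : Finset α} (hAB : Disjoint A B)
    (f : α → ℝ) : |𝔼 x ∈ A, f x - 𝔼 x ∈ A ∪ B, f x| ≤ |𝔼 x ∈ B, f x - 𝔼 x ∈ A, f x| := by
  rcases (A ∪ B).eq_empty_or_nonempty with h | h
  · obtain ⟨rfl, rfl⟩ := union_eq_empty.1 h
    simp
  have hpos : 0 < (#(A ∪ B) : ℝ) := by exact_mod_cast h.card_pos
  have hcomb : 𝔼 x ∈ A, f x - 𝔼 x ∈ A ∪ B, f x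
      = #B / #(A ∪ B) * (𝔼 x ∈ A, f x - 𝔼 x ∈ B, f x) := by
    have := card_union_mul_expect hAB f
    rw [card_union_of_disjoint hAB] at this hpos ⊢
    push_cast at this hpos ⊢
    field_simp
    linear_combination -this
  rw [hcomb, abs_mul, abs_of_nonneg (by positivity), abs_sub_comm]
  exact mul_le_of_le_one_left (abs_nonneg _)
    (div_le_one_of_le₀ (by exact_mod_cast card_le_card subset_union_right) hpos.le)

lemma centeredExpSum_union_le [DecidableEq α] {A B : Finset α} (hAB : Disjoint A B)
    {f : α → ℝ} {l V D : ℝ}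
    (hA : centeredExpSum A f l ≤ #A * exp V) (hB : centeredExpSum B f l ≤ #B * exp V)
    (hD : A.Nonempty → B.Nonempty → |𝔼 x ∈ B, f x - 𝔼 x ∈ A, f x| ≤ D) :
    centeredExpSum (A ∪ B) f l ≤ #(A ∪ B) * exp (V + (l * D) ^ 2 / 2) := by
  have hV : exp V ≤ exp (V + (l * D) ^ 2 / 2) := exp_le_exp.2 (by linarith [sq_nonneg (l * D)])
  rcases A.eq_empty_or_nonempty with rfl | hAne
  · rw [empty_union]; exact hB.trans (by gcongr)
  rcases B.eq_empty_or_nonempty with rfl | hBne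
  · rw [union_empty]; exact hA.trans (by gcongr)
  have hμ := card_union_mul_expect hAB f
  rw [card_union_of_disjoint hAB] at hμ
  push_cast at hμ
  set μ := 𝔼 x ∈ A ∪ B, f x
  set μA := 𝔼 x ∈ A, f x
  set μB := 𝔼 x ∈ B, f x
  have hsplit : centeredExpSum (A ∪ B) f l
      = exp (l * (μA - μ)) * centeredExpSum A f l + exp (l * (μB - μ)) * centeredExpSum B f l := by
    simp only [centeredExpSum, sum_union hAB, mul_sum, ← exp_add, μ, μA, μB]
    congr 1 <;> exact sum_congr rfl fun x _ => by ring_nf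
  have hbal : (#A : ℝ) * (l * (μA - μ)) + #B * (l * (μB - μ)) = 0 := by
    linear_combination (-l) * hμ
  have hdevA : |l * (μA - μ)| ≤ |l| * D := by
    rw [abs_mul]
    gcongr
    exact (abs_expect_sub_expect_union_le hAB f).trans (hD hAne hBne)
  have hdevB : |l * (μB - μ)| ≤ |l| * D := by
    rw [abs_mul]
    gcongr
    have := abs_expect_sub_expect_union_le hAB.symm f
    rw [union_comm] at this
    exact this.trans ((abs_sub_comm _ _).trans_le (hD hAne hBne))
  calc centeredExpSum (A ∪ B) f l
      ≤ exp (l * (μA - μ)) * (#A * exp V) + exp (l * (μB - μ)) * (#B * exp V) := by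
        rw [hsplit]; gcongr
    _ = exp V * (#A * exp (l * (μA - μ)) + #B * exp (l * (μB - μ))) := by ring
    _ ≤ exp V * ((#A + #B) * exp ((|l| * D) ^ 2 / 2)) := by
        gcongr
        exact mul_exp_add_mul_exp_le (by positivity) (by positivity) hbal hdevA hdevB
    _ = #(A ∪ B) * exp (V + (l * D) ^ 2 / 2) := by
        rw [card_union_of_disjoint hAB, exp_add, mul_pow, mul_pow, sq_abs]; push_cast; ring

lemma card_filter_le_of_centeredExpSum_le {S : Finset α} {f : α → ℝ} {σ2 t : ℝ} (ht : 0 ≤ t)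
    (h : ∀ l, 0 ≤ l → centeredExpSum S f l ≤ #S * exp (l ^ 2 * σ2 / 2)) :
    (#{x ∈ S | t ≤ f x - 𝔼 y ∈ S, f y} : ℝ) ≤ #S * exp (-t ^ 2 / (2 * σ2)) := by
  have hmarkov (l : ℝ) (hl : 0 ≤ l) :
      #{x ∈ S | t ≤ f x - 𝔼 y ∈ S, f y} * exp (l * t) ≤ centeredExpSum S f l := by
    rw [← nsmul_eq_mul, ← sum_const, centeredExpSum]
    calc ∑ _x ∈ S with t ≤ f _x - 𝔼 y ∈ S, f y, exp (l * t)
        ≤ ∑ x ∈ S with t ≤ f x - 𝔼 y ∈ S, f y, exp (l * (f x - 𝔼 y ∈ S, f y)) :=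
          sum_le_sum fun x hx => by gcongr; exact (mem_filter.1 hx).2
      _ ≤ _ := sum_le_sum_of_subset_of_nonneg (filter_subset _ _) fun _ _ _ => (exp_pos _).le
  rcases le_or_gt σ2 0 with hσ | hσ
  · have hexp : 1 ≤ exp (-t ^ 2 / (2 * σ2)) :=
      one_le_exp (div_nonneg_of_nonpos (by nlinarith) (by linarith))
    calc (#{x ∈ S | t ≤ f x - 𝔼 y ∈ S, f y} : ℝ) ≤ #S := by exact_mod_cast card_filter_le _ _
      _ ≤ #S * exp (-t ^ 2 / (2 * σ2)) := le_mul_of_one_le_right (by positivity) hexp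
  · have := (hmarkov (t / σ2) (by positivity)).trans (h _ (by positivity))
    rw [← le_div_iff₀ (exp_pos _), mul_div_assoc, ← exp_sub] at this
    refine this.trans_eq ?_
    congr 2
    field_simp
    ring

end Expect

section BoundedDifferences

variable {ι : Type*} [DecidableEq ι] {f : (ι → Bool) → ℝ} {c : ι → ℝ}

lemma abs_update_sub_le
    (hbd : ∀ (x : ι → Bool) (i : ι), |f (update x i false) - f (update x i true)| ≤ c i)
    (x : ι → Bool) (j : ι) (b : Bool) : |f (update x j b) - f x| ≤ c j := by
  have hc := (abs_nonneg _).trans (hbd x j)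
  have key : ∀ b b' : Bool, |f (update x j b) - f (update x j b')| ≤ c j := by
    have := hbd x j
    intro b b'
    cases b <;> cases b' <;> simp_all [abs_sub_comm]
  simpa using key b (x j)

lemma abs_comp_swap_sub_le
    (hbd : ∀ (x : ι → Bool) (i : ι), |f (update x i false) - f (update x i true)| ≤ c i)
    (x : ι → Bool) (i j : ι) : |f (x ∘ Equiv.swap i j) - f x| ≤ c i + c j := by
  rw [Equiv.comp_swap_eq_update]
  exact (abs_sub_le _ (f (update x j (x i))) _).trans
    (add_le_add (abs_update_sub_le hbd _ _ _) (abs_update_sub_le hbd _ _ _))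

end BoundedDifferences

section BoolSlice

variable {ι : Type*} [Fintype ι] [DecidableEq ι]

/-- Ones are counted over all of `ι`, so that fixing one more coordinate of a slice gives a slice
with the same `k`. -/
def boolSlice (s : Finset ι) (k : ℕ) (x₀ : ι → Bool) : Finset (ι → Bool) :=
  {x | (∀ j ∉ s, x j = x₀ j) ∧ #{j | x j = true} = k}

variable {s : Finset ι} {k : ℕ} {x₀ x y : ι → Bool} {i j : ι}

lemma mem_boolSlice : x ∈ boolSlice s k x₀ ↔ (∀ j ∉ s, x j = x₀ j) ∧ #{j | x j = true} = k := by
  simp [boolSlice]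

lemma filter_boolSlice_eq (hi : i ∈ s) (b : Bool) :
    {x ∈ boolSlice s k x₀ | x i = b} = boolSlice (s.erase i) k (update x₀ i b) := by
  ext x
  simp only [mem_filter, mem_boolSlice, mem_erase, not_and_or, ne_eq, not_not]
  constructor
  · rintro ⟨⟨hout, hk⟩, hxi⟩
    refine ⟨fun j hj => ?_, hk⟩
    rcases hj with rfl | hj
    · simp [hxi]
    · rw [update_of_ne (by rintro rfl; exact hj hi), hout j hj]
  · rintro ⟨hout, hk⟩
    refine ⟨⟨fun j hj => ?_, hk⟩, by simpa using hout i (.inl rfl)⟩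
    rw [hout j (.inr hj), update_of_ne (by rintro rfl; exact hj hi)]

lemma comp_swap_mem_boolSlice (hx : x ∈ boolSlice s k x₀) (hi : i ∈ s) (hj : j ∈ s) :
    x ∘ Equiv.swap i j ∈ boolSlice s k x₀ := by
  rw [mem_boolSlice] at hx ⊢
  refine ⟨fun l hl => ?_, ?_⟩
  · rw [comp_apply, Equiv.swap_apply_of_ne_of_ne (by rintro rfl; exact hl hi)
      (by rintro rfl; exact hl hj), hx.1 l hl]
  · rw [← hx.2]
    exact card_nbij' (Equiv.swap i j) (Equiv.swap i j) (fun l hl => by simpa using hl)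
      (fun l hl => by simpa using hl) (fun l _ => by simp) (fun l _ => by simp)

lemma card_filter_eq_of_mem_boolSlice (hx : x ∈ boolSlice s k x₀) (hy : y ∈ boolSlice s k x₀) :
    #{j ∈ s | x j = true} = #{j ∈ s | y j = true} := by
  have hsplit {z : ι → Bool} (hz : z ∈ boolSlice s k x₀) :
      k = #{j ∈ s | z j = true} + #{j ∈ sᶜ | x₀ j = true} := by
    rw [mem_boolSlice] at hz
    rw [← hz.2, ← card_union_of_disjoint (disjoint_filter_filter disjoint_compl_right)]
    congr 1
    ext j
    by_cases hj : j ∈ s <;> simp [hj, hz.1 j]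
  have := hsplit hx
  have := hsplit hy
  omega

lemma sum_sum_comp_swap_eq {M : Type*} [AddCommMonoid M] (hi : i ∈ s) (g : (ι → Bool) → M) :
    ∑ x ∈ boolSlice s k x₀ with x i = false, ∑ j ∈ s with x j = true, g (x ∘ Equiv.swap i j)
      = ∑ y ∈ boolSlice s k x₀ with y i = true, ∑ j ∈ s with y j = false, g y := by
  rw [sum_comm' (t' := s) (s' := fun j => {x ∈ boolSlice s k x₀ | x i = false ∧ x j = true})
      (by intro x j; simp only [mem_filter]; tauto),
    sum_comm' (t' := s) (s' := fun j => {y ∈ boolSlice s k x₀ | y i = true ∧ y j = false})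
      (by intro x j; simp only [mem_filter]; tauto)]
  refine sum_congr rfl fun j hj => ?_
  refine sum_nbij' (· ∘ Equiv.swap i j) (· ∘ Equiv.swap i j) ?_ ?_ ?_ ?_ (fun _ _ => rfl)
  iterate 2
    intro x hx
    simp only [mem_filter] at hx ⊢
    exact ⟨comp_swap_mem_boolSlice hx.1 hi hj, by simp [hx.2.1, hx.2.2]⟩
  all_goals intro x _; ext l; simp

variable {f : (ι → Bool) → ℝ} {c : ι → ℝ}

lemma abs_expect_sub_expect_le
    (hbd : ∀ (x : ι → Bool) (i : ι), |f (update x i false) - f (update x i true)| ≤ c i)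
    (hi : i ∈ s) (hc : ∀ j ∈ s, c j ≤ c i)
    (hA : {x ∈ boolSlice s k x₀ | x i = false}.Nonempty)
    (hB : {x ∈ boolSlice s k x₀ | x i = true}.Nonempty) :
    |𝔼 x ∈ boolSlice s k x₀ with x i = true, f x - 𝔼 x ∈ boolSlice s k x₀ with x i = false, f x|
      ≤ 2 * c i := by
  set S := boolSlice s k x₀
  set A := {x ∈ S | x i = false}
  set B := {x ∈ S | x i = true}
  obtain ⟨y₁, hy₁⟩ := hB
  set m := #{j ∈ s | y₁ j = true}
  set z := #s - m
  have hm (x) (hx : x ∈ S) : #{j ∈ s | x j = true} = m :=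
    card_filter_eq_of_mem_boolSlice hx (mem_filter.1 hy₁).1
  have hz (y) (hy : y ∈ S) : #{j ∈ s | y j = false} = z := by
    have := card_filter_add_card_filter_not (s := s) (fun j => y j = true)
    simp only [Bool.not_eq_true] at this
    have := hm y hy
    omega
  have hm0 : 0 < m := card_pos.2 ⟨i, mem_filter.2 ⟨hi, (mem_filter.1 hy₁).2⟩⟩
  have hA' (g : (ι → Bool) → ℝ) : ∑ x ∈ A, ∑ j ∈ s with x j = true, g x = m * ∑ x ∈ A, g x := by
    rw [mul_sum]
    exact sum_congr rfl fun x hx => by rw [sum_const, hm x (mem_filter.1 hx).1, nsmul_eq_mul]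
  have hB' (g : (ι → Bool) → ℝ) : ∑ y ∈ B, ∑ j ∈ s with y j = false, g y = z * ∑ y ∈ B, g y := by
    rw [mul_sum]
    exact sum_congr rfl fun y hy => by rw [sum_const, hz y (mem_filter.1 hy).1, nsmul_eq_mul]
  -- double counting the pairs `(x, j)` of `sum_sum_comp_swap_eq`, with weights `1` and `f`
  have hcount : (m : ℝ) * #A = z * #B := by
    have := sum_sum_comp_swap_eq (k := k) (x₀ := x₀) hi (fun _ => (1 : ℝ))
    rw [hA' fun _ => 1, hB' fun _ => 1] at this
    simpa using this
  have hsum : ∑ x ∈ A, ∑ j ∈ s with x j = true, (f (x ∘ Equiv.swap i j) - f x)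
      = z * ∑ y ∈ B, f y - m * ∑ x ∈ A, f x := by
    simp only [sum_sub_distrib]
    rw [sum_sum_comp_swap_eq hi f, hA' f, hB' f]
  have hbound : |∑ x ∈ A, ∑ j ∈ s with x j = true, (f (x ∘ Equiv.swap i j) - f x)|
      ≤ m * #A * (2 * c i) := calc
    _ ≤ ∑ x ∈ A, ∑ j ∈ s with x j = true, |f (x ∘ Equiv.swap i j) - f x| :=
      (abs_sum_le_sum_abs _ _).trans (sum_le_sum fun x _ => abs_sum_le_sum_abs _ _)
    _ ≤ ∑ x ∈ A, ∑ j ∈ s with x j = true, 2 * c i := by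
      gcongr with x hx j hj
      linarith [abs_comp_swap_sub_le hbd x i j, hc j (mem_filter.1 hj).1]
    _ = m * #A * (2 * c i) := by rw [hA']; simp [mul_assoc]
  have hpos : 0 < (m : ℝ) * #A := by have := hA.card_pos; positivity
  have hdiff : (m : ℝ) * #A * (𝔼 x ∈ B, f x - 𝔼 x ∈ A, f x)
      = z * ∑ y ∈ B, f y - m * ∑ x ∈ A, f x := by
    rw [← card_mul_expect B f, ← card_mul_expect A f]
    linear_combination (𝔼 x ∈ B, f x) * hcount
  rw [← mul_le_mul_iff_of_pos_left hpos, ← abs_of_pos hpos, ← abs_mul, hdiff, ← hsum,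
    abs_of_pos hpos]
  exact hbound

theorem centeredExpSum_boolSlice_le
    (hbd : ∀ (x : ι → Bool) (i : ι), |f (update x i false) - f (update x i true)| ≤ c i)
    (l : ℝ) (s : Finset ι) (k : ℕ) (x₀ : ι → Bool) :
    centeredExpSum (boolSlice s k x₀) f l
      ≤ #(boolSlice s k x₀) * exp (l ^ 2 * (4 * ∑ j ∈ s, c j ^ 2) / 2) := by
  induction s using Finset.strongInduction generalizing x₀ with
  | H s ih =>
  rcases s.eq_empty_or_nonempty with rfl | hs
  · have hsub : boolSlice ∅ k x₀ ⊆ {x₀} := fun x hx =>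
      mem_singleton.2 (funext fun j => (mem_boolSlice.1 hx).1 j (notMem_empty j))
    rcases subset_singleton_iff.1 hsub with h | h <;> simp [h, centeredExpSum]
  obtain ⟨i, hi, hmax⟩ := exists_max_image s c hs
  have hsplit : boolSlice s k x₀
      = {x ∈ boolSlice s k x₀ | x i = false} ∪ {x ∈ boolSlice s k x₀ | x i = true} := by
    ext x; cases h : x i <;> simp [h]
  have hdisj :
      Disjoint {x ∈ boolSlice s k x₀ | x i = false} {x ∈ boolSlice s k x₀ | x i = true} :=
    disjoint_filter.2 fun x _ h => by simp [h]
  have ih' (b : Bool) :=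
    filter_boolSlice_eq (k := k) (x₀ := x₀) hi b ▸ ih _ (erase_ssubset hi) (update x₀ i b)
  rw [hsplit]
  refine (centeredExpSum_union_le hdisj (ih' false) (ih' true)
    (abs_expect_sub_expect_le hbd hi hmax)).trans_eq ?_
  rw [← add_sum_erase s _ hi]
  ring_nf

end BoolSlice

theorem stmt1_general (n k : ℕ) (f : (Fin n → Bool) → ℝ) (c : Fin n → ℝ)
    (hbd : ∀ (x : Fin n → Bool) (i : Fin n),
      |f (Function.update x i false) - f (Function.update x i true)| ≤ c i)
    (t : ℝ) (ht : 0 ≤ t) :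
    (((Finset.univ : Finset (Fin n → Bool)).filter
          (fun x => ((Finset.univ.filter (fun i => x i = true)).card = k) ∧
            t ≤ f x - (∑ y ∈ (Finset.univ : Finset (Fin n → Bool)).filter
                (fun y => (Finset.univ.filter (fun i => y i = true)).card = k), f y) /
              (((Finset.univ : Finset (Fin n → Bool)).filter
                (fun y => (Finset.univ.filter (fun i => y i = true)).card = k)).card : ℝ))).card : ℝ) /
        (((Finset.univ : Finset (Fin n → Bool)).filter
          (fun y => (Finset.univ.filter (fun i => y i = true)).card = k)).card : ℝ)
      ≤ Real.exp (-(t ^ 2) / (8 * ∑ i : Fin n, (c i) ^ 2)) := by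
  have hslice : ({y | #{i | y i = true} = k} : Finset (Fin n → Bool))
      = boolSlice univ k (fun _ => false) := by
    ext y; simp [mem_boolSlice]
  rw [← filter_filter, hslice, ← expect_eq_sum_div_card]
  refine div_le_of_le_mul₀ (by positivity) (exp_pos _).le ?_
  rw [mul_comm, show 8 * ∑ i, c i ^ 2 = 2 * (4 * ∑ i, c i ^ 2) by ring]
  exact card_filter_le_of_centeredExpSum_le ht
    fun l _ => centeredExpSum_boolSlice_le hbd l univ k _

/-- Azuma-type concentration on the slice. If `f : {0,1}^n → ℝ` has the
bounded-difference property with constants `c i`, and `ξ` is uniform on the zero-one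
vectors with exactly `k` ones, then `Pr(f(ξ) - E f(ξ) ≥ t) ≤ exp(-t² / (8 ∑ cᵢ²))`. -/
theorem stmt1 (n k : ℕ) (hk : k ≤ n) (f : (Fin n → Bool) → ℝ) (c : Fin n → ℝ)
    (hbd : ∀ (x : Fin n → Bool) (i : Fin n),
      |f (Function.update x i false) - f (Function.update x i true)| ≤ c i)
    (t : ℝ) (ht : 0 ≤ t) :
    (((Finset.univ : Finset (Fin n → Bool)).filter
          (fun x => ((Finset.univ.filter (fun i => x i = true)).card = k) ∧
            t ≤ f x - (∑ y ∈ (Finset.univ : Finset (Fin n → Bool)).filter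
                (fun y => (Finset.univ.filter (fun i => y i = true)).card = k), f y) /
              (((Finset.univ : Finset (Fin n → Bool)).filter
                (fun y => (Finset.univ.filter (fun i => y i = true)).card = k)).card : ℝ))).card : ℝ) /
        (((Finset.univ : Finset (Fin n → Bool)).filter
          (fun y => (Finset.univ.filter (fun i => y i = true)).card = k)).card : ℝ)
      ≤ Real.exp (-(t ^ 2) / (8 * ∑ i : Fin n, (c i) ^ 2)) :=
  stmt1_general n k f c hbd t ht
end

section
/- Let $Z$ be a non-constant real random variable with $\mathbb{E} Z = 0$ and $\mathbb{E} Z^4 \le b (\mathbb{E} Z^2)^2$ for some $b > 0$. Then for any $\ell \in \mathbb{R}$, $\Pr(Z \ne \ell) \ge 1/(2^{4/3} b)$. -/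
/-! Put `p = P(Z ≠ ℓ)`, `q = P(Z = ℓ) = 1 - p`, `V = E Z²`. Since `Z = ℓ` off `{Z ≠ ℓ}`, Cauchy–Schwarz
on `{Z ≠ ℓ}`, applied to `Z` and to `Z²`, gives `(qℓ)² ≤ p (V - qℓ²)` and
`(V - qℓ²)² ≤ p (E Z⁴ - qℓ⁴) ≤ p (b V² - qℓ⁴)`. With `u = qℓ²` the first says `u ≤ pV`, the second
`(qV - u)² + pqV² ≤ bpqV²`. If `p < q` this forces `(q - p)² + pq ≤ bpq`, and
`(q - p)² + pq - 4q/9 = 3p² - 23p/9 + 5/9` has no real root, so `bp > 4/9`; if `p ≥ q` then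
`bp ≥ p ≥ 1/2` because `b ≥ E Z⁴ / V² ≥ 1`. Finally `2^{4/3} ≥ 9/4`. -/

open MeasureTheory Set

section CauchySchwarz

variable {α : Type*} [MeasurableSpace α] {μ : Measure α} [IsFiniteMeasure μ] {f : α → ℝ}

theorem sq_integral_le_measureReal_univ_mul_integral_sq (hf : MemLp f 2 μ) :
    (∫ x, f x ∂μ) ^ 2 ≤ μ.real univ * ∫ x, f x ^ 2 ∂μ := by
  rcases eq_zero_or_neZero μ with rfl | _
  · simp
  have hm : 0 < μ.real univ := by simp [measureReal_def, ENNReal.toReal_pos_iff, NeZero.ne]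
  have jensen := (Even.convexOn_pow (n := 2) even_two).map_average_le
    (continuous_pow 2).continuousOn isClosed_univ (ae_of_all _ fun _ => mem_univ _)
    (hf.integrable one_le_two) hf.integrable_sq
  simp only [average_eq, smul_eq_mul] at jensen
  calc (∫ x, f x ∂μ) ^ 2 = μ.real univ ^ 2 * ((μ.real univ)⁻¹ * ∫ x, f x ∂μ) ^ 2 := by
        field_simp
    _ ≤ μ.real univ ^ 2 * ((μ.real univ)⁻¹ * ∫ x, f x ^ 2 ∂μ) := by gcongr
    _ = μ.real univ * ∫ x, f x ^ 2 ∂μ := by field_simp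

theorem sq_setIntegral_le_measureReal_mul_setIntegral_sq (hf : MemLp f 2 μ) (s : Set α) :
    (∫ x in s, f x ∂μ) ^ 2 ≤ μ.real s * ∫ x in s, f x ^ 2 ∂μ := by
  simpa using sq_integral_le_measureReal_univ_mul_integral_sq (hf.restrict s)

end CauchySchwarz

section LevelSet

variable {Ω : Type*} [MeasurableSpace Ω] {μ : Measure Ω} {Z : Ω → ℝ} {g : ℝ → ℝ}

theorem integral_comp_eq_setIntegral_ne_add (hZ : AEMeasurable Z μ)
    (hg : Integrable (fun ω => g (Z ω)) μ) (ℓ : ℝ) :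
    ∫ ω, g (Z ω) ∂μ = ∫ ω in {ω | Z ω ≠ ℓ}, g (Z ω) ∂μ + μ.real {ω | Z ω = ℓ} * g ℓ := by
  have hlevel : NullMeasurableSet {ω | Z ω = ℓ} μ := hZ.nullMeasurable (measurableSet_singleton ℓ)
  rw [← integral_add_compl₀ hlevel hg, add_comm,
    setIntegral_congr_fun₀ hlevel (g := fun _ => g ℓ) fun ω (hω : Z ω = ℓ) => by rw [hω],
    setIntegral_const, smul_eq_mul]
  rfl

theorem integral_sq_pos_of_not_ae_eq_const (hZ : Integrable (fun ω => Z ω ^ 2) μ)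
    (hnc : ¬ ∃ c : ℝ, ∀ᵐ ω ∂μ, Z ω = c) :
    0 < ∫ ω, Z ω ^ 2 ∂μ := by
  refine (integral_nonneg fun ω => sq_nonneg (Z ω)).lt_of_ne fun hzero => hnc ⟨0, ?_⟩
  filter_upwards [(integral_eq_zero_iff_of_nonneg (fun ω => sq_nonneg (Z ω)) hZ).mp hzero.symm]
    with ω hω
  exact pow_eq_zero_iff two_ne_zero |>.mp hω

theorem memLp_sq_of_memLp_four (hZ : MemLp Z 4 μ) : MemLp (fun ω => Z ω ^ 2) 2 μ := by
  refine (memLp_two_iff_integrable_sq (hZ.1.pow 2)).2 ?_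
  simpa [← pow_mul, (show Even 4 by decide).pow_abs] using hZ.integrable_norm_pow (by norm_num)

variable [IsFiniteMeasure μ]

theorem sq_integral_comp_sub_le (hZ : AEMeasurable Z μ) (hg : MemLp (fun ω => g (Z ω)) 2 μ)
    (ℓ : ℝ) :
    (∫ ω, g (Z ω) ∂μ - μ.real {ω | Z ω = ℓ} * g ℓ) ^ 2 ≤
      μ.real {ω | Z ω ≠ ℓ} * (∫ ω, g (Z ω) ^ 2 ∂μ - μ.real {ω | Z ω = ℓ} * g ℓ ^ 2) := by
  rw [integral_comp_eq_setIntegral_ne_add hZ (hg.integrable one_le_two),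
    integral_comp_eq_setIntegral_ne_add (g := fun x => g x ^ 2) hZ hg.integrable_sq,
    add_sub_cancel_right, add_sub_cancel_right]
  exact sq_setIntegral_le_measureReal_mul_setIntegral_sq hg _

end LevelSet

theorem four_div_nine_le_mul_of_moment_bounds {p q V M b ℓ : ℝ} (hpq : p + q = 1) (hp : 0 ≤ p)
    (hV : 0 < V) (hVM : V ^ 2 ≤ M) (hMb : M ≤ b * V ^ 2)
    (h1 : (q * ℓ) ^ 2 ≤ p * (V - q * ℓ ^ 2))
    (h2 : (V - q * ℓ ^ 2) ^ 2 ≤ p * (M - q * ℓ ^ 4)) :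
    4 / 9 ≤ b * p := by
  have hb : 1 ≤ b := le_of_mul_le_mul_right (by linarith) (pow_pos hV 2)
  rcases le_or_gt q p with hqp | hpq_lt
  · nlinarith
  have hq : 0 < q := by linarith
  set u := q * ℓ ^ 2
  have hu : u ≤ p * V := by linear_combination h1 - u * hpq
  -- `(qV - u)² + pqV² = q (V - u)² + p u²` when `p + q = 1`
  have hkey : (q * V - u) ^ 2 + p * q * V ^ 2 ≤ b * p * q * V ^ 2 := by
    linear_combination q * h2 + p * q * hMb + (q * V ^ 2 - u ^ 2) * hpq
  have hgap : ((q - p) * V) ^ 2 ≤ (q * V - u) ^ 2 :=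
    pow_le_pow_left₀ (by nlinarith) (by linarith) 2
  have hquad : (q - p) ^ 2 + p * q ≤ b * p * q :=
    le_of_mul_le_mul_right (by linarith) (pow_pos hV 2)
  nlinarith [sq_nonneg (p - 23 / 54)]

theorem one_div_two_rpow_four_thirds_mul_le {b p : ℝ} (hp : 0 ≤ p) (h : 4 / 9 ≤ b * p) :
    1 / (2 ^ ((4 : ℝ) / 3) * b) ≤ p := by
  have hcube : (2 ^ ((4 : ℝ) / 3) : ℝ) ^ 3 = 16 := by
    rw [← Real.rpow_natCast, ← Real.rpow_mul zero_le_two]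
    norm_num
  have hc : 9 / 4 ≤ (2 ^ ((4 : ℝ) / 3) : ℝ) :=
    le_of_pow_le_pow_left₀ three_ne_zero (by positivity) (by rw [hcube]; norm_num)
  have hb : 0 < b := by
    by_contra! hb
    nlinarith [mul_nonpos_of_nonpos_of_nonneg hb hp]
  rw [div_le_iff₀ (by positivity)]
  nlinarith

theorem stmt2_general {Ω : Type*} [MeasurableSpace Ω] (μ : Measure Ω) [IsProbabilityMeasure μ]
    (Z : Ω → ℝ) (hZ : MemLp Z 4 μ)
    (hnc : ¬ ∃ c : ℝ, ∀ᵐ ω ∂μ, Z ω = c)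
    (hmean : ∫ ω, Z ω ∂μ = 0)
    (b : ℝ)
    (h4 : ∫ ω, (Z ω) ^ 4 ∂μ ≤ b * (∫ ω, (Z ω) ^ 2 ∂μ) ^ 2) :
    ∀ ℓ : ℝ, 1 / (2 ^ ((4 : ℝ) / 3) * b) ≤ (μ {ω | Z ω ≠ ℓ}).toReal := by
  intro ℓ
  have hZ2 : MemLp Z 2 μ := hZ.mono_exponent (by norm_num)
  have hZsq : MemLp (fun ω => Z ω ^ 2) 2 μ := memLp_sq_of_memLp_four hZ
  have hVM : (∫ ω, Z ω ^ 2 ∂μ) ^ 2 ≤ ∫ ω, Z ω ^ 4 ∂μ := by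
    simpa [← pow_mul] using sq_integral_le_measureReal_univ_mul_integral_sq hZsq
  have h1 := sq_integral_comp_sub_le (g := id) hZ.aemeasurable hZ2 ℓ
  have h2 := sq_integral_comp_sub_le (g := fun x => x ^ 2) hZ.aemeasurable hZsq ℓ
  simp only [id, hmean, zero_sub, neg_sq] at h1
  simp only [← pow_mul] at h2
  have hpq : μ.real {ω | Z ω ≠ ℓ} + μ.real {ω | Z ω = ℓ} = 1 := by
    rw [add_comm, ← probReal_univ (μ := μ)]
    exact measureReal_add_measureReal_compl₀
      (hZ.aemeasurable.nullMeasurable (measurableSet_singleton ℓ))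
  exact one_div_two_rpow_four_thirds_mul_le measureReal_nonneg <|
    four_div_nine_le_mul_of_moment_bounds hpq measureReal_nonneg
      (integral_sq_pos_of_not_ae_eq_const hZ2.integrable_sq hnc) hVM h4 h1 h2

/-- If `Z` is a non-constant real random variable with mean zero and
`E Z⁴ ≤ b (E Z²)²`, then for every `ℓ ∈ ℝ`, `Pr(Z ≠ ℓ) ≥ 1/(2^{4/3} b)`. -/
theorem stmt2 {Ω : Type*} [MeasurableSpace Ω] (μ : Measure Ω) [IsProbabilityMeasure μ]
    (Z : Ω → ℝ) (hZ : MemLp Z 4 μ)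
    (hnc : ¬ ∃ c : ℝ, ∀ᵐ ω ∂μ, Z ω = c)
    (hmean : ∫ ω, Z ω ∂μ = 0)
    (b : ℝ) (hb : 0 < b)
    (h4 : ∫ ω, (Z ω) ^ 4 ∂μ ≤ b * (∫ ω, (Z ω) ^ 2 ∂μ) ^ 2) :
    ∀ ℓ : ℝ, 1 / (2 ^ ((4 : ℝ) / 3) * b) ≤ (μ {ω | Z ω ≠ ℓ}).toReal :=
  stmt2_general μ Z hZ hnc hmean b h4
end

section
/- Let $r$ be a positive integer, and let $G$ be an $r$-uniform hypergraph on $2k$ vertices with $k \ge r$. If every $k$-element vertex subset of $G$ induces the same number of edges, then $G$ is a complete $r$-uniform hypergraph or has no edges at all. -/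
/-!
If `|V| ≥ 2k`, `r ≤ k` and `h` sums to zero over the `r`-subsets of every `k`-subset of `V`, then
`h` vanishes on `r`-subsets, by induction on `r`: for distinct `u, v`, the function
`T ↦ h (T ∪ {u}) - h (T ∪ {v})` on `V \ {u, v}` has the same property for `(r - 1, k - 1)`, so `h`
is invariant under exchanging one element, hence constant on `r`-sets, and the constant is zero
because a `k`-set has `C(k, r) ≠ 0` subsets of size `r`. Applied to `C(k, r)` times the indicator
of `G` minus the common number of edges in a `k`-set, this makes the indicator of `G` constant on
`r`-sets.
-/

open Finset

namespace Finset

variable {α β : Type*} [DecidableEq α]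

lemma sum_powersetCard_succ_insert [AddCommMonoid β] {a : α} {s : Finset α} (ha : a ∉ s)
    (n : ℕ) (f : Finset α → β) :
    ∑ t ∈ (insert a s).powersetCard (n + 1), f t =
      (∑ t ∈ s.powersetCard (n + 1), f t) + ∑ t ∈ s.powersetCard n, f (insert a t) := by
  rw [powersetCard_succ_insert ha, sum_union, sum_image]
  · exact insert_erase_invOn.2.injOn.mono fun t ht ↦ notMem_mono (mem_powersetCard.1 ht).1 ha
  · aesop (add simp [disjoint_left, insert_subset_iff])

lemma eq_of_forall_insert_eq_insert {γ : Type*} {V : Finset α} {n : ℕ} {h : Finset α → γ}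
    (hex : ∀ T ⊆ V, #T = n → ∀ u ∈ V, ∀ v ∈ V, u ∉ T → v ∉ T →
      h (insert u T) = h (insert v T))
    {S S' : Finset α} (hS : S ⊆ V) (hSc : #S = n + 1) (hS' : S' ⊆ V) (hSc' : #S' = n + 1) :
    h S = h S' := by
  induction hd : #(S \ S') generalizing S with
  | zero =>
    rw [card_eq_zero, sdiff_eq_empty_iff_subset] at hd
    rw [eq_of_subset_of_card_le hd (by omega)]
  | succ d ih =>
    obtain ⟨x, hx⟩ : (S \ S').Nonempty := by rw [← card_pos]; omega
    obtain ⟨y, hy⟩ : (S' \ S).Nonempty := by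
      rw [← card_pos, ← card_sdiff_comm (hSc.trans hSc'.symm)]; omega
    rw [mem_sdiff] at hx hy
    have hyT : y ∉ S.erase x := fun h ↦ hy.2 (mem_of_mem_erase h)
    have hTc : #(S.erase x) = n := by rw [card_erase_of_mem hx.1]; omega
    rw [← insert_erase hx.1, hex _ ((erase_subset x S).trans hS) hTc x (hS hx.1) y (hS' hy.1)
      (notMem_erase x S) hyT]
    refine ih (insert_subset (hS' hy.1) ((erase_subset x S).trans hS))
      (by rw [card_insert_of_notMem hyT, hTc]) ?_
    rw [insert_sdiff_of_mem _ hy.1, erase_sdiff_comm, card_erase_of_mem (mem_sdiff.2 hx), hd]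
    rfl

lemma eq_zero_of_sum_powersetCard_eq_zero [AddCommGroup β] [IsAddTorsionFree β] {r k : ℕ}
    (hrk : r ≤ k) {V : Finset α} (hV : 2 * k ≤ #V) {h : Finset α → β}
    (hsum : ∀ C ⊆ V, #C = k → ∑ S ∈ C.powersetCard r, h S = 0) {S : Finset α} (hS : S ⊆ V)
    (hSc : #S = r) : h S = 0 := by
  induction r generalizing k V h S with
  | zero =>
    obtain ⟨C, hCV, hCc⟩ := V.exists_subset_card_eq (n := k) (by omega)
    simpa [card_eq_zero.1 hSc] using hsum C hCV hCc
  | succ r ih =>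
    have hex : ∀ T ⊆ V, #T = r → ∀ u ∈ V, ∀ v ∈ V, u ∉ T → v ∉ T →
        h (insert u T) = h (insert v T) := by
      intro T hTV hTc u hu v hv huT hvT
      obtain rfl | huv := eq_or_ne u v
      · rfl
      have huvV : {u, v} ⊆ V := insert_subset hu (singleton_subset_iff.2 hv)
      rw [← sub_eq_zero]
      refine ih (k := k - 1) (V := V \ {u, v}) (h := fun T ↦ h (insert u T) - h (insert v T))
        (by omega) ?_ ?_ ?_ hTc
      · rw [card_sdiff_of_subset huvV, card_pair huv]; omega
      · -- the `(r + 1)`-subsets of `D` cancel between `D ∪ {u}` and `D ∪ {v}`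
        intro D hDW hDc
        have huD : u ∉ D := fun h ↦ by simpa using (mem_sdiff.1 (hDW h)).2
        have hvD : v ∉ D := fun h ↦ by simpa using (mem_sdiff.1 (hDW h)).2
        have hDV : D ⊆ V := hDW.trans sdiff_subset
        have hu0 := hsum _ (insert_subset hu hDV) (by rw [card_insert_of_notMem huD]; omega)
        have hv0 := hsum _ (insert_subset hv hDV) (by rw [card_insert_of_notMem hvD]; omega)
        rw [sum_powersetCard_succ_insert huD] at hu0
        rw [sum_powersetCard_succ_insert hvD] at hv0
        rw [sum_sub_distrib, sub_eq_zero]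
        exact add_left_cancel (hu0.trans hv0.symm)
      · intro x hx
        simp only [mem_sdiff, mem_insert, mem_singleton]
        exact ⟨hTV hx, by rintro (rfl | rfl) <;> contradiction⟩
    obtain ⟨C, hCV, hCc⟩ := V.exists_subset_card_eq (n := k) (by omega)
    have hC := hsum C hCV hCc
    rw [sum_congr rfl fun S' hS' ↦ eq_of_forall_insert_eq_insert hex
      ((mem_powersetCard.1 hS').1.trans hCV) (mem_powersetCard.1 hS').2 hS hSc,
      sum_const, card_powersetCard, hCc] at hC
    exact (nsmul_eq_zero_iff_right (Nat.choose_pos hrk).ne').1 hC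

lemma eq_of_sum_powersetCard_eq [AddCommGroup β] [IsAddTorsionFree β] {r k : ℕ} (hrk : r ≤ k)
    {V : Finset α} (hV : 2 * k ≤ #V) {h : Finset α → β}
    (hsum : ∀ C ⊆ V, #C = k → ∀ D ⊆ V, #D = k →
      ∑ S ∈ C.powersetCard r, h S = ∑ S ∈ D.powersetCard r, h S)
    {S S' : Finset α} (hS : S ⊆ V) (hSc : #S = r) (hS' : S' ⊆ V) (hSc' : #S' = r) :
    h S = h S' := by
  obtain ⟨D, hDV, hDc⟩ := V.exists_subset_card_eq (n := k) (by omega)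
  have hzero : ∀ {T}, T ⊆ V → #T = r →
      k.choose r • h T - ∑ S ∈ D.powersetCard r, h S = 0 := fun hT hTc ↦ by
    refine eq_zero_of_sum_powersetCard_eq_zero (h := fun T ↦ k.choose r • h T - _) hrk hV
      (fun C hCV hCc ↦ ?_) hT hTc
    rw [sum_sub_distrib, sum_const, card_powersetCard, hCc, ← smul_sum, hsum C hCV hCc D hDV hDc,
      sub_self]
  rw [← nsmul_right_inj (Nat.choose_pos hrk).ne', sub_eq_zero.1 (hzero hS hSc),
    sub_eq_zero.1 (hzero hS' hSc')]

lemma filter_mem_powersetCard_eq_filter_subset {G : Finset (Finset α)} {r : ℕ}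
    (hG : ∀ e ∈ G, #e = r) (C : Finset α) :
    (C.powersetCard r).filter (· ∈ G) = G.filter (· ⊆ C) := by
  ext e
  simp only [mem_filter, mem_powersetCard]
  exact ⟨fun ⟨⟨heC, _⟩, heG⟩ ↦ ⟨heG, heC⟩, fun ⟨heG, heC⟩ ↦ ⟨⟨heC, hG e heG⟩, heG⟩⟩

end Finset

open scoped Classical in
theorem stmt3_general (r k : ℕ) (hrk : r ≤ k)
    (G : Finset (Finset (Fin (2 * k)))) (hG : ∀ e ∈ G, e.card = r)
    (hconst : ∀ A ∈ (Finset.univ : Finset (Fin (2 * k))).powersetCard k,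
      ∀ B ∈ (Finset.univ : Finset (Fin (2 * k))).powersetCard k,
        (G.filter (fun e => e ⊆ A)).card = (G.filter (fun e => e ⊆ B)).card) :
    G = (Finset.univ : Finset (Fin (2 * k))).powersetCard r ∨ G = ∅ := by
  have hind : ∀ {S S'}, #S = r → #S' = r →
      (if S ∈ G then (1 : ℤ) else 0) = if S' ∈ G then 1 else 0 := fun hSc hS'c ↦ by
    refine eq_of_sum_powersetCard_eq (h := fun S ↦ if S ∈ G then (1 : ℤ) else 0) hrk
      (V := univ) (by simp) (fun C _ hCc D _ hDc ↦ ?_) (subset_univ _) hSc (subset_univ _) hS'c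
    simp only [sum_boole, filter_mem_powersetCard_eq_filter_subset hG]
    exact_mod_cast hconst C (by simpa using hCc) D (by simpa using hDc)
  obtain rfl | ⟨e₀, he₀⟩ := G.eq_empty_or_nonempty
  · exact Or.inr rfl
  refine Or.inl (ext fun e ↦ ⟨fun he ↦ by simpa using hG e he, fun he ↦ ?_⟩)
  simpa [he₀] using hind (mem_powersetCard.1 he).2 (hG e₀ he₀)

open scoped Classical in
/-- If an `r`-uniform hypergraph on `2k` vertices (with `k ≥ r ≥ 1`) is such
that every `k`-vertex subset induces the same number of edges, then it is complete or empty. -/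
theorem stmt3 (r k : ℕ) (hr : 0 < r) (hrk : r ≤ k)
    (G : Finset (Finset (Fin (2 * k)))) (hG : ∀ e ∈ G, e.card = r)
    (hconst : ∀ A ∈ (Finset.univ : Finset (Fin (2 * k))).powersetCard k,
      ∀ B ∈ (Finset.univ : Finset (Fin (2 * k))).powersetCard k,
        (G.filter (fun e => e ⊆ A)).card = (G.filter (fun e => e ⊆ B)).card) :
    G = (Finset.univ : Finset (Fin (2 * k))).powersetCard r ∨ G = ∅ :=
  stmt3_general r k hrk G hG hconst
end

section
/- Let $G$ be an $r$-uniform hypergraph on a vertex set $V$ of size $2k$, with $k \ge r$, such that every $k$-element subset of $V$ induces the same number of edges. Then for every $s \le k$, the quantity $\deg(S)$, the number of edges containing $S$, is constant over all $s$-element vertex subsets $S$. -/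
/-!
Write `e(A)` for the number of edges inside `A`. Double counting the pairs `e ⊆ P ⊆ A` with
`#P = k` gives `C(#A, k) · e(k-set) = e(A) · C(#A - r, k - r)`, so `e(A)` depends only on `#A`
once `#A ≥ k`. By inclusion–exclusion, `deg S = ∑_{T ⊆ S} (-1)^#T · e(Tᶜ)`, and for `#S ≤ k` every
`Tᶜ` here has at least `2k - k = k` vertices, so each term depends only on `#T` and the sum only
on `#S`.
-/

open Finset

namespace Finset

variable {α : Type*} [DecidableEq α] {G : Finset (Finset α)} {r k m : ℕ}

theorem choose_mul_eq_card_filter_subset_mul_choose (hG : ∀ e ∈ G, #e = r) (hrk : r ≤ k)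
    (hm : ∀ P : Finset α, #P = k → #{e ∈ G | e ⊆ P} = m) (A : Finset α) :
    (#A).choose k * m = #{e ∈ G | e ⊆ A} * (#A - r).choose (k - r) := by
  rw [← card_powersetCard]
  refine card_mul_eq_card_mul (fun P e => e ⊆ P) (fun P hP => ?_) (fun e he => ?_)
  · rw [mem_powersetCard] at hP
    rw [← hm P hP.2, bipartiteAbove, filter_filter]
    exact congrArg card <| filter_congr fun e _ => and_iff_right_of_imp (·.trans hP.1)
  · rw [mem_filter] at he
    rw [← hG e he.1]
    exact card_filter_powersetCard_subset _ _ _ he.2 (hG e he.1 ▸ hrk)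

theorem card_filter_subset_eq_div (hG : ∀ e ∈ G, #e = r) (hrk : r ≤ k)
    (hm : ∀ P : Finset α, #P = k → #{e ∈ G | e ⊆ P} = m) {A : Finset α} (hA : k ≤ #A) :
    #{e ∈ G | e ⊆ A} = (#A).choose k * m / (#A - r).choose (k - r) := by
  rw [choose_mul_eq_card_filter_subset_mul_choose hG hrk hm,
    Nat.mul_div_cancel _ (Nat.choose_pos (by omega))]

theorem card_filter_superset_eq_sum_powerset (G : Finset (Finset α)) (S : Finset α) :
    (#{e ∈ G | S ⊆ e} : ℤ) = ∑ T ∈ S.powerset, (-1 : ℤ) ^ #T * #{e ∈ G | Disjoint e T} := by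
  simp_rw [card_filter, Nat.cast_sum, mul_sum]
  rw [sum_comm]
  refine sum_congr rfl fun e _ => ?_
  have hdisj : {T ∈ S.powerset | Disjoint e T} = (S \ e).powerset := by
    ext T
    simp [subset_sdiff, disjoint_comm]
  simp only [Nat.cast_ite, Nat.cast_one, Nat.cast_zero, mul_ite, mul_one, mul_zero]
  rw [← sum_filter, hdisj, sum_powerset_neg_one_pow_card]
  exact if_congr sdiff_eq_empty_iff_subset.symm rfl rfl

theorem card_filter_superset_eq_of_card_eq [Fintype α] (hG : ∀ e ∈ G, #e = r) (hrk : r ≤ k)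
    (hm : ∀ P : Finset α, #P = k → #{e ∈ G | e ⊆ P} = m) {S S' : Finset α}
    (hS : #S + k ≤ Fintype.card α) (hSS' : #S = #S') :
    #{e ∈ G | S ⊆ e} = #{e ∈ G | S' ⊆ e} := by
  set n := Fintype.card α
  set f : ℕ → ℤ := fun i => (-1) ^ i * ((n - i).choose k * m / (n - i - r).choose (k - r) : ℕ)
  have hdeg : ∀ S : Finset α, #S + k ≤ n →
      (#{e ∈ G | S ⊆ e} : ℤ) = ∑ i ∈ range (#S + 1), (#S).choose i • f i := by
    intro S hS
    rw [← sum_powerset_apply_card, card_filter_superset_eq_sum_powerset]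
    refine sum_congr rfl fun T hT => ?_
    have hTS : #T ≤ #S := card_le_card (mem_powerset.1 hT)
    have hTc : #Tᶜ = n - #T := card_compl T
    simp_rw [f, ← le_compl_iff_disjoint_right, ← hTc]
    rw [card_filter_subset_eq_div hG hrk hm (by omega)]
  have hdeg' := hdeg S' (by omega)
  rw [← hSS'] at hdeg'
  exact_mod_cast (hdeg S hS).trans hdeg'.symm

end Finset

open scoped Classical in
theorem stmt4_general (r k : ℕ) (hrk : r ≤ k)
    (G : Finset (Finset (Fin (2 * k)))) (hG : ∀ e ∈ G, e.card = r)
    (hconst : ∀ A ∈ (Finset.univ : Finset (Fin (2 * k))).powersetCard k,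
      ∀ B ∈ (Finset.univ : Finset (Fin (2 * k))).powersetCard k,
        (G.filter (fun e => e ⊆ A)).card = (G.filter (fun e => e ⊆ B)).card) :
    ∀ s ≤ k, ∀ S T : Finset (Fin (2 * k)), S.card = s → T.card = s →
      (G.filter (fun e => S ⊆ e)).card = (G.filter (fun e => T ⊆ e)).card := by
  intro s hs S T hS hT
  obtain ⟨P₀, -, hP₀⟩ := exists_subset_card_eq (s := (univ : Finset (Fin (2 * k)))) (n := k)
    (by simp; omega)
  have hm : ∀ P : Finset (Fin (2 * k)), #P = k → #{e ∈ G | e ⊆ P} = #{e ∈ G | e ⊆ P₀} :=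
    fun P hP => hconst P (mem_powersetCard.2 ⟨subset_univ P, hP⟩)
      P₀ (mem_powersetCard.2 ⟨subset_univ P₀, hP₀⟩)
  exact card_filter_superset_eq_of_card_eq hG hrk hm (by simp; omega) (hS.trans hT.symm)

open scoped Classical in
/-- If every `k`-vertex subset of an `r`-uniform hypergraph on `2k` vertices
(with `k ≥ r`) induces the same number of edges, then for every `s ≤ k` the degree
`deg(S)` (number of edges containing `S`) is constant over `s`-element vertex sets `S`. -/
theorem stmt4 (r k : ℕ) (hr : 0 < r) (hrk : r ≤ k)
    (G : Finset (Finset (Fin (2 * k)))) (hG : ∀ e ∈ G, e.card = r)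
    (hconst : ∀ A ∈ (Finset.univ : Finset (Fin (2 * k))).powersetCard k,
      ∀ B ∈ (Finset.univ : Finset (Fin (2 * k))).powersetCard k,
        (G.filter (fun e => e ⊆ A)).card = (G.filter (fun e => e ⊆ B)).card) :
    ∀ s ≤ k, ∀ S T : Finset (Fin (2 * k)), S.card = s → T.card = s →
      (G.filter (fun e => S ⊆ e)).card = (G.filter (fun e => T ⊆ e)).card :=
  stmt4_general r k hrk G hG hconst
end

section
/- Consider a red-blue colouring of the edges of the complete graph $K_n$ with at least $\varepsilon n^2$ blue edges and at least $\varepsilon n^2$ red edges, where $\varepsilon > 0$ is a constant. Then, for $n$ sufficiently large, there are at least $c(\varepsilon) n^4$ ordered 4-tuples of distinct vertices $(v, w, v', w')$ such that the path $v w v' w'$ is alternating, i.e., the edges $vw$ and $v'w'$ have one colour and the edge $wv'$ has the other colour, for some constant $c(\varepsilon) > 0$ depending only on $\varepsilon$. -/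
/-!
Call a vertex mixed if it has at least `δ n` neighbours of each colour, where `δ = ε / 4`, and
let `L_c` be the set of vertices with fewer than `δ n` neighbours of colour `c`. If fewer than
`δ n` vertices were mixed, counting degrees would give `|L_c| > 3 ε n / 2` for both colours.
An edge between `L_red` and `L_blue` is counted by the low degree of one of its ends, so
`|L_red| |L_blue| ≤ δ n (|L_red| + |L_blue|) + n`, which fails once `ε² n ≥ 1`.
Given `δ n` mixed vertices, each ordered pair `(w, v')` of them is the middle of at least
`(δ n - 1)(δ n - 2)` alternating paths `v w v' w'`: take `v` and `w'` among the neighbours of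
`w` and `v'` in the colour opposite to that of `wv'`.
-/

open Finset

theorem Finset.card_mul_card_le_card_filter_ne_add {α : Type*} [DecidableEq α] (s t : Finset α) :
    #s * #t ≤ #{p ∈ s ×ˢ t | p.1 ≠ p.2} + #s := by
  rw [← card_product, ← card_filter_add_card_filter_not (s := s ×ˢ t) (p := fun p => p.1 ≠ p.2)]
  gcongr
  refine card_le_card_of_injOn Prod.fst (fun p hp => (mem_product.1 (mem_filter.1 hp).1).1) ?_
  intro p hp q hq hpq
  simp only [coe_filter, ne_eq, not_not] at hp hq
  exact Prod.ext hpq (by rw [← hp.2, ← hq.2, hpq])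

theorem SimpleGraph.card_interedges_le_sum_degree {V : Type*} [Fintype V] [DecidableEq V]
    (G : SimpleGraph V) [DecidableRel G.Adj] (s t : Finset V) :
    #(G.interedges s t) ≤ ∑ v ∈ s, G.degree v := by
  rw [interedges, Rel.interedges_eq_biUnion]
  refine card_biUnion_le.trans (sum_le_sum fun v _ => ?_)
  rw [card_map, ← card_neighborFinset_eq_degree]
  exact card_le_card fun u hu => by simpa using (mem_filter.1 hu).2

theorem SimpleGraph.card_interedges_comm {V : Type*} (G : SimpleGraph V) [DecidableRel G.Adj]
    (s t : Finset V) : #(G.interedges s t) = #(G.interedges t s) :=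
  have := G.symm
  Rel.card_interedges_comm s t

section

variable {V : Type*} [Fintype V] [DecidableEq V] (col : Sym2 V → Bool)

def colourGraph (c : Bool) : SimpleGraph V where
  Adj u v := u ≠ v ∧ col s(u, v) = c
  symm := ⟨fun _ _ h => ⟨h.1.symm, by rw [Sym2.eq_swap]; exact h.2⟩⟩
  loopless := ⟨fun _ h => h.1 rfl⟩

instance (c : Bool) : DecidableRel (colourGraph col c).Adj :=
  fun u v => inferInstanceAs (Decidable (u ≠ v ∧ col s(u, v) = c))

theorem colourGraph_edgeFinset (c : Bool) :
    (colourGraph col c).edgeFinset = univ.filter fun e => ¬ e.IsDiag ∧ col e = c := by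
  ext e
  induction e using Sym2.ind with
  | _ u v =>
    simp only [SimpleGraph.mem_edgeFinset, SimpleGraph.mem_edgeSet, mem_filter, mem_univ, true_and,
      Sym2.mk_isDiag_iff]
    rfl

noncomputable def lowDegreeVertices (δ : ℝ) (c : Bool) : Finset V :=
  {w | ((colourGraph col c).degree w : ℝ) < δ * Fintype.card V}

noncomputable def mixedVertices (δ : ℝ) : Finset V :=
  {w | ∀ c, δ * Fintype.card V ≤ (colourGraph col c).degree w}

theorem mem_mixedVertices {δ : ℝ} {w : V} :
    w ∈ mixedVertices col δ ↔ ∀ c, δ * Fintype.card V ≤ (colourGraph col c).degree w := by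
  simp [mixedVertices]

theorem sum_degree_lowDegreeVertices_le (δ : ℝ) (c : Bool) :
    ∑ w ∈ lowDegreeVertices col δ c, ((colourGraph col c).degree w : ℝ)
      ≤ #(lowDegreeVertices col δ c) * (δ * Fintype.card V) := by
  rw [← nsmul_eq_mul]
  exact sum_le_card_nsmul _ _ _ fun w hw => (mem_filter.1 hw).2.le

theorem two_mul_card_edgeFinset_le {δ : ℝ} (hδ : 0 ≤ δ) (c : Bool) :
    2 * (#(colourGraph col c).edgeFinset : ℝ) ≤ Fintype.card V *
      (#(mixedVertices col δ) + #(lowDegreeVertices col δ (!c))) + δ * Fintype.card V ^ 2 := by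
  set G := colourGraph col c
  set high : Finset V := {w | ¬ (G.degree w : ℝ) < δ * Fintype.card V}
  have high_subset : high ⊆ mixedVertices col δ ∪ lowDegreeVertices col δ (!c) := by
    intro w hw
    by_cases hlow : w ∈ lowDegreeVertices col δ (!c)
    · exact mem_union_right _ hlow
    refine mem_union_left _ ((mem_mixedVertices col).2 fun c' => ?_)
    simp only [high, lowDegreeVertices, mem_filter, mem_univ, true_and, not_lt] at hw hlow
    cases c <;> cases c' <;> assumption
  have hhigh : ∑ w ∈ high, (G.degree w : ℝ)
      ≤ (#(mixedVertices col δ) + #(lowDegreeVertices col δ (!c))) * Fintype.card V := by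
    refine (sum_le_card_nsmul _ _ (Fintype.card V : ℝ) fun w _ => ?_).trans ?_
    · exact_mod_cast (G.degree_lt_card_verts w).le
    rw [nsmul_eq_mul]
    gcongr
    exact_mod_cast (card_le_card high_subset).trans (card_union_le _ _)
  have hlow : ∑ w ∈ {w | (G.degree w : ℝ) < δ * Fintype.card V}, (G.degree w : ℝ)
      ≤ #(lowDegreeVertices col δ c) * (δ * Fintype.card V) :=
    sum_degree_lowDegreeVertices_le col δ c
  have hlow_card : (#(lowDegreeVertices col δ c) : ℝ) ≤ Fintype.card V := by
    exact_mod_cast card_le_univ _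
  have hsum : 2 * (#G.edgeFinset : ℝ) = ∑ w, (G.degree w : ℝ) := by
    exact_mod_cast G.sum_degrees_eq_twice_card_edges.symm
  rw [hsum, ← sum_filter_add_sum_filter_not univ fun w => (G.degree w : ℝ) < δ * Fintype.card V]
  have : 0 ≤ δ * Fintype.card V := by positivity
  nlinarith

theorem card_lowDegreeVertices_mul_le (δ : ℝ) :
    (#(lowDegreeVertices col δ false) * #(lowDegreeVertices col δ true) : ℝ) ≤
      δ * Fintype.card V * (#(lowDegreeVertices col δ false) + #(lowDegreeVertices col δ true))
        + #(lowDegreeVertices col δ false) := by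
  set B := lowDegreeVertices col δ false
  set R := lowDegreeVertices col δ true
  have hpairs : #B * #R ≤ #{p ∈ B ×ˢ R | p.1 ≠ p.2} + #B := card_mul_card_le_card_filter_ne_add B R
  have hsplit : {p ∈ B ×ˢ R | p.1 ≠ p.2} ⊆
      (colourGraph col false).interedges B R ∪ (colourGraph col true).interedges B R := by
    intro p hp
    rw [mem_filter, mem_product] at hp
    rw [mem_union, SimpleGraph.mem_interedges_iff, SimpleGraph.mem_interedges_iff]
    cases h : col s(p.1, p.2)
    · exact Or.inl ⟨hp.1.1, hp.1.2, hp.2, h⟩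
    · exact Or.inr ⟨hp.1.1, hp.1.2, hp.2, h⟩
  have hoff : #{p ∈ B ×ˢ R | p.1 ≠ p.2} ≤
      ∑ w ∈ B, (colourGraph col false).degree w + ∑ w ∈ R, (colourGraph col true).degree w := by
    refine (card_le_card hsplit).trans ((card_union_le _ _).trans (add_le_add ?_ ?_))
    · exact (colourGraph col false).card_interedges_le_sum_degree B R
    · rw [SimpleGraph.card_interedges_comm]
      exact (colourGraph col true).card_interedges_le_sum_degree R B
  have hB := sum_degree_lowDegreeVertices_le col δ false
  have hR := sum_degree_lowDegreeVertices_le col δ true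
  have : (#B * #R : ℝ) ≤ ∑ w ∈ B, ((colourGraph col false).degree w : ℝ)
      + ∑ w ∈ R, ((colourGraph col true).degree w : ℝ) + #B := by
    exact_mod_cast hpairs.trans (Nat.add_le_add_right hoff _)
  linarith

theorem le_card_mixedVertices {ε : ℝ} (hε : 0 < ε) (hn : 1 ≤ ε ^ 2 * Fintype.card V)
    (hcol : ∀ c, ε * Fintype.card V ^ 2 ≤ #(colourGraph col c).edgeFinset) :
    ε / 4 * Fintype.card V ≤ #(mixedVertices col (ε / 4)) := by
  have hn_pos : (0 : ℝ) < Fintype.card V := by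
    by_contra! h
    nlinarith [sq_nonneg ε]
  by_contra! hm
  have hlow_large : ∀ c, 3 / 2 * ε * Fintype.card V < #(lowDegreeVertices col (ε / 4) (!c)) := by
    intro c
    have hedges := two_mul_card_edgeFinset_le col (by positivity : 0 ≤ ε / 4) c
    have hcount := hcol c
    have hfew_mixed := mul_lt_mul_of_pos_left hm hn_pos
    refine lt_of_mul_lt_mul_left ?_ hn_pos.le
    nlinarith
  have hx := hlow_large true
  have hy := hlow_large false
  simp only [Bool.not_true, Bool.not_false] at hx hy
  have hx_le : (#(lowDegreeVertices col (ε / 4) false) : ℝ) ≤ Fintype.card V := by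
    exact_mod_cast card_le_univ _
  have hxy := card_lowDegreeVertices_mul_le col (ε / 4)
  -- `(5 ε n / 4)² - (ε n / 4)² = 3 ε² n² / 2 > n`
  have hprod : (5 / 4 * ε * Fintype.card V) * (5 / 4 * ε * Fintype.card V) ≤
      (#(lowDegreeVertices col (ε / 4) false) - ε / 4 * Fintype.card V) *
        (#(lowDegreeVertices col (ε / 4) true) - ε / 4 * Fintype.card V) :=
    mul_le_mul (by linarith) (by linarith) (by positivity) (by linarith)
  nlinarith

def alternatingTuples : Finset (V × V × V × V) :=
  {t | ([t.1, t.2.1, t.2.2.1, t.2.2.2] : List V).Nodup ∧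
    col s(t.1, t.2.1) = col s(t.2.2.1, t.2.2.2) ∧ col s(t.2.1, t.2.2.1) ≠ col s(t.1, t.2.1)}

def alternatingExtensions (w v' : V) : Finset (V × V) :=
  let G := colourGraph col (!col s(w, v'))
  {q ∈ (G.neighborFinset w).erase v' ×ˢ (G.neighborFinset v').erase w | q.1 ≠ q.2}

theorem mem_alternatingTuples_of_mem_alternatingExtensions {v w v' w' : V} (hwv' : w ≠ v')
    (h : (v, w') ∈ alternatingExtensions col w v') : (v, w, v', w') ∈ alternatingTuples col := by
  simp only [alternatingExtensions, mem_filter, mem_product, mem_erase,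
    SimpleGraph.mem_neighborFinset] at h
  obtain ⟨⟨⟨hvv', hwv, hcol_wv⟩, hw'w, hv'w', hcol_v'w'⟩, hvw'⟩ := h
  have hcol_vw : col s(v, w) = !col s(w, v') := by rw [Sym2.eq_swap]; exact hcol_wv
  simp only [alternatingTuples, mem_filter, mem_univ, true_and, List.nodup_cons, List.mem_cons,
    List.not_mem_nil, or_false, List.nodup_nil, and_true, not_or]
  refine ⟨⟨⟨Ne.symm hwv, hvv', hvw'⟩, ⟨hwv', Ne.symm hw'w⟩, hv'w', not_false⟩, ?_, ?_⟩
  · rw [hcol_vw, hcol_v'w']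
  · rw [hcol_vw]; simp

theorem le_card_alternatingExtensions {δ : ℝ} (hδ : 2 ≤ δ * Fintype.card V) {w v' : V}
    (hw : w ∈ mixedVertices col δ) (hv' : v' ∈ mixedVertices col δ) :
    (δ * Fintype.card V - 1) * (δ * Fintype.card V - 2) ≤ #(alternatingExtensions col w v') := by
  have card_erase_ge (s : Finset V) (a : V) : (#s : ℝ) - 1 ≤ #(s.erase a) := by
    have : #s ≤ #(s.erase a) + 1 := Nat.sub_le_iff_le_add.1 pred_card_le_card_erase
    linarith [show (#s : ℝ) ≤ #(s.erase a) + 1 by exact_mod_cast this]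
  let G := colourGraph col (!col s(w, v'))
  have hS := card_erase_ge (G.neighborFinset w) v'
  have hS' := card_erase_ge (G.neighborFinset v') w
  have hdeg : δ * Fintype.card V ≤ G.degree w := (mem_mixedVertices col).1 hw _
  have hdeg' : δ * Fintype.card V ≤ G.degree v' := (mem_mixedVertices col).1 hv' _
  rw [SimpleGraph.card_neighborFinset_eq_degree] at hS hS'
  have hpairs : (#((G.neighborFinset w).erase v') * #((G.neighborFinset v').erase w) : ℝ) ≤
      #(alternatingExtensions col w v') + #((G.neighborFinset w).erase v') := by
    exact_mod_cast card_mul_card_le_card_filter_ne_add _ _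
  have hprod := mul_le_mul (a := δ * Fintype.card V - 1) (b := (#((G.neighborFinset w).erase v') : ℝ))
    (c := δ * Fintype.card V - 2) (d := #((G.neighborFinset v').erase w) - 1)
    (by linarith) (by linarith) (by linarith) (by linarith)
  nlinarith

theorem le_card_alternatingTuples {δ : ℝ} (hδ : 4 ≤ δ * Fintype.card V)
    (hM : δ * Fintype.card V ≤ #(mixedVertices col δ)) :
    (δ / 2) ^ 4 * Fintype.card V ^ 4 ≤ #(alternatingTuples col) := by
  let paths := (mixedVertices col δ).offDiag.sigma fun p => alternatingExtensions col p.1 p.2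
  have hinj : #paths ≤ #(alternatingTuples col) := by
    refine card_le_card_of_injOn (fun x => (x.2.1, x.1.1, x.1.2, x.2.2)) ?_ ?_
    · rintro ⟨⟨w, v'⟩, ⟨v, w'⟩⟩ hx
      simp only [paths, coe_sigma, Set.mem_sigma_iff, mem_coe, mem_offDiag] at hx
      exact mem_alternatingTuples_of_mem_alternatingExtensions col hx.1.2.2 hx.2
    · rintro ⟨⟨w, v'⟩, ⟨v, w'⟩⟩ - ⟨⟨w₂, v'₂⟩, ⟨v₂, w'₂⟩⟩ - h
      simp only [Prod.mk.injEq] at h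
      obtain ⟨rfl, rfl, rfl, rfl⟩ := h
      rfl
  have hpaths : (#(mixedVertices col δ).offDiag : ℝ) *
      ((δ * Fintype.card V - 1) * (δ * Fintype.card V - 2)) ≤ #paths := by
    rw [card_sigma, Nat.cast_sum, ← nsmul_eq_mul]
    exact card_nsmul_le_sum _ _ _ fun p hp => le_card_alternatingExtensions col (by linarith)
      (mem_offDiag.1 hp).1 (mem_offDiag.1 hp).2.1
  have hoff : δ * Fintype.card V * (δ * Fintype.card V - 1) ≤ #(mixedVertices col δ).offDiag := by
    rw [offDiag_card, Nat.cast_sub (Nat.le_mul_self _), Nat.cast_mul]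
    nlinarith
  calc (δ / 2) ^ 4 * Fintype.card V ^ 4 = (δ * Fintype.card V / 2) ^ 4 := by ring
    _ ≤ δ * Fintype.card V * (δ * Fintype.card V - 1) *
        ((δ * Fintype.card V - 1) * (δ * Fintype.card V - 2)) := by
      have h1 : δ * Fintype.card V / 2 ≤ δ * Fintype.card V - 1 := by linarith
      have h2 : δ * Fintype.card V / 2 ≤ δ * Fintype.card V - 2 := by linarith
      have h0 : 0 ≤ δ * Fintype.card V / 2 := by linarith
      calc (δ * Fintype.card V / 2) ^ 4 = (δ * Fintype.card V / 2) * (δ * Fintype.card V / 2) *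
            ((δ * Fintype.card V / 2) * (δ * Fintype.card V / 2)) := by ring
        _ ≤ _ := by gcongr <;> nlinarith
    _ ≤ #(mixedVertices col δ).offDiag * ((δ * Fintype.card V - 1) * (δ * Fintype.card V - 2)) :=
      mul_le_mul_of_nonneg_right hoff (by nlinarith)
    _ ≤ #(alternatingTuples col) := hpaths.trans (by exact_mod_cast hinj)

end

/-- For every `ε > 0` there is `c > 0` such that for all sufficiently large `n`:
any red-blue colouring of the edges of `K_n` with at least `ε n²` edges of each colour has
at least `c n⁴` ordered 4-tuples of distinct vertices `(v, w, v', w')` such that the path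
`v w v' w'` is alternating (edges `vw` and `v'w'` have one colour, `wv'` has the other). -/
theorem stmt6 (ε : ℝ) (hε : 0 < ε) :
    ∃ c : ℝ, 0 < c ∧ ∃ N : ℕ, ∀ n ≥ N, ∀ col : Sym2 (Fin n) → Bool,
      ε * n ^ 2 ≤ (((Finset.univ : Finset (Sym2 (Fin n))).filter
          (fun e => ¬ e.IsDiag ∧ col e = true)).card : ℝ) →
      ε * n ^ 2 ≤ (((Finset.univ : Finset (Sym2 (Fin n))).filter
          (fun e => ¬ e.IsDiag ∧ col e = false)).card : ℝ) →
      c * n ^ 4 ≤ (((Finset.univ : Finset (Fin n × Fin n × Fin n × Fin n)).filter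
          (fun t => ([t.1, t.2.1, t.2.2.1, t.2.2.2] : List (Fin n)).Nodup ∧
            col s(t.1, t.2.1) = col s(t.2.2.1, t.2.2.2) ∧
            col s(t.2.1, t.2.2.1) ≠ col s(t.1, t.2.1))).card : ℝ) := by
  refine ⟨(ε / 8) ^ 4, by positivity, ⌈max (16 / ε) (1 / ε ^ 2)⌉₊, fun n hn col hblue hred => ?_⟩
  have hn' : max (16 / ε) (1 / ε ^ 2) ≤ (Fintype.card (Fin n) : ℝ) := by
    rw [Fintype.card_fin]
    exact Nat.ceil_le.1 hn
  have h4 : 4 ≤ ε / 4 * Fintype.card (Fin n) := by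
    have := (div_le_iff₀ hε).1 (le_of_max_le_left hn')
    linarith
  have h1 : 1 ≤ ε ^ 2 * Fintype.card (Fin n) := by
    have := (div_le_iff₀ (by positivity)).1 (le_of_max_le_right hn')
    linarith
  have hcol : ∀ c, ε * (Fintype.card (Fin n) : ℝ) ^ 2 ≤ #(colourGraph col c).edgeFinset := by
    rw [Fintype.card_fin, Bool.forall_bool, colourGraph_edgeFinset, colourGraph_edgeFinset]
    exact ⟨hred, hblue⟩
  have htuples := le_card_alternatingTuples col h4 (le_card_mixedVertices col hε h1 hcol)
  rw [Fintype.card_fin] at htuples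
  calc (ε / 8) ^ 4 * n ^ 4 = (ε / 4 / 2) ^ 4 * n ^ 4 := by ring
    _ ≤ _ := htuples
end

section
/- Let $A$ and $B$ be disjoint finite sets with $|A|, |B| \ge 5$, let $M \subseteq A \times B$ be a set of pairwise disjoint pairs, and let $G_{A,B,M}$ be the 3-uniform hypergraph on $A \cup B$ whose edges are the triples intersecting both $A$ and $B$, except those triples containing a pair from $M$. Then for any six distinct vertices $x, x', y, y', z, z'$ of $G_{A,B,M}$, with edge indicators $a$, we have $a_{xyz} - a_{xyz'} - a_{xy'z} - a_{x'yz} + a_{xy'z'} + a_{x'yz'} + a_{x'y'z} - a_{x'y'z'} = 0$. -/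
open Finset
open scoped Classical

/-- The edge indicator of the 3-graph `G_{A,B,M}`: `{u,v,w}` is an edge iff it meets both
`A` and `B` and contains no pair from `M`. -/
noncomputable def gabmInd {V : Type*} [DecidableEq V] (A B : Finset V)
    (M : Finset (V × V)) (u v w : V) : ℤ :=
  if (({u, v, w} : Finset V) ∩ A).Nonempty ∧ (({u, v, w} : Finset V) ∩ B).Nonempty ∧
      ∀ p ∈ M, ¬(p.1 ∈ ({u, v, w} : Finset V) ∧ p.2 ∈ ({u, v, w} : Finset V))
  then 1 else 0

/-! For distinct vertices of `A ∪ B`, the edge indicator of `{u, v, w}` is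
`1 - [u, v, w ∈ A] - [u, v, w ∈ B]` minus the number of `M`-pairs inside the triple: a
triple contains at most one `M`-pair, and a triple containing one already meets both `A` and
`B`. Substituting `[· ∈ B] = 1 - [· ∈ A]`, the cubic terms cancel, so the indicator is a sum
of functions each depending on only two of the three vertices, and the alternating sum over
the box `{x, x'} × {y, y'} × {z, z'}` annihilates every such function. -/

theorem box_sum_eq_zero_of_eq_add {V G : Type*} [AddCommGroup G] (f : V → V → V → G)
    (g h k : V → V → G) (x x' y y' z z' : V)
    (hf : ∀ u ∈ ({x, x'} : Set V), ∀ v ∈ ({y, y'} : Set V), ∀ w ∈ ({z, z'} : Set V),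
      f u v w = g u v + h u w + k v w) :
    f x y z - f x y z' - f x y' z - f x' y z + f x y' z' + f x' y z'
      + f x' y' z - f x' y' z' = 0 := by
  simp only [Set.mem_insert_iff, Set.mem_singleton_iff, forall_eq_or_imp, forall_eq] at hf
  obtain ⟨⟨⟨h1, h2⟩, h3, h4⟩, ⟨h5, h6⟩, h7, h8⟩ := hf
  rw [h1, h2, h3, h4, h5, h6, h7, h8]
  abel

theorem ite_or_or_eq_add {P Q R : Prop} [Decidable P] [Decidable Q] [Decidable R]
    (hPQ : ¬(P ∧ Q)) (hPR : ¬(P ∧ R)) (hQR : ¬(Q ∧ R)) :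
    (if P ∨ Q ∨ R then 1 else 0 : ℤ) =
      (if P then 1 else 0) + (if Q then 1 else 0) + (if R then 1 else 0) := by
  by_cases P <;> by_cases Q <;> by_cases R <;> simp_all

theorem ite_and_not_eq_sub {X P : Prop} [Decidable X] [Decidable P] (h : P → X) :
    (if X ∧ ¬P then 1 else 0 : ℤ) = (if X then 1 else 0) - (if P then 1 else 0) := by
  by_cases X <;> by_cases P <;> simp_all

section

variable {V : Type*} [DecidableEq V]

noncomputable def memInd (A : Finset V) (u : V) : ℤ := if u ∈ A then 1 else 0

noncomputable def pairInd (M : Finset (V × V)) (a b : V) : ℤ :=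
  if (a, b) ∈ M ∨ (b, a) ∈ M then 1 else 0

theorem memInd_of_mem_union {A B : Finset V} (hAB : Disjoint A B) {t : V} (ht : t ∈ A ∪ B) :
    memInd B t = 1 - memInd A t := by
  rcases mem_union.1 ht with h | h
  · simp [memInd, h, disjoint_left.1 hAB h]
  · simp [memInd, h, disjoint_right.1 hAB h]

theorem eq_of_mem_matching {A B : Finset V} {M : Finset (V × V)} (hAB : Disjoint A B)
    (hMAB : ∀ p ∈ M, p.1 ∈ A ∧ p.2 ∈ B)
    (hMdisj : ∀ p ∈ M, ∀ q ∈ M, p ≠ q → p.1 ≠ q.1 ∧ p.2 ≠ q.2)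
    {p q : V × V} (hp : p ∈ M) (hq : q ∈ M) {t : V} (htp : t = p.1 ∨ t = p.2)
    (htq : t = q.1 ∨ t = q.2) : p = q := by
  by_contra hpq
  have hA := fun r (hr : r ∈ M) => (hMAB r hr).1
  have hB := fun r (hr : r ∈ M) => (hMAB r hr).2
  obtain ⟨h1, h2⟩ := hMdisj p hp q hq hpq
  rcases htp with rfl | rfl <;> rcases htq with htq | htq
  · exact h1 htq
  · exact disjoint_left.1 hAB (hA p hp) (htq ▸ hB q hq)
  · exact disjoint_left.1 hAB (htq ▸ hA q hq) (hB p hp)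
  · exact h2 htq

theorem not_two_pairs_through_vertex {A B : Finset V} {M : Finset (V × V)} (hAB : Disjoint A B)
    (hMAB : ∀ p ∈ M, p.1 ∈ A ∧ p.2 ∈ B)
    (hMdisj : ∀ p ∈ M, ∀ q ∈ M, p ≠ q → p.1 ≠ q.1 ∧ p.2 ≠ q.2) {a b c : V} (hbc : b ≠ c) :
    ¬(((a, b) ∈ M ∨ (b, a) ∈ M) ∧ ((a, c) ∈ M ∨ (c, a) ∈ M)) := by
  rintro ⟨hb | hb, hc | hc⟩ <;>
    · have := eq_of_mem_matching hAB hMAB hMdisj hb hc (t := a) (by simp) (by simp)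
      simp only [Prod.mk.injEq] at this
      exact hbc (by grind)

theorem exists_pair_mem_triple_iff {A B : Finset V} {M : Finset (V × V)} (hAB : Disjoint A B)
    (hMAB : ∀ p ∈ M, p.1 ∈ A ∧ p.2 ∈ B) (u v w : V) :
    (∃ p ∈ M, p.1 ∈ ({u, v, w} : Finset V) ∧ p.2 ∈ ({u, v, w} : Finset V)) ↔
      ((u, v) ∈ M ∨ (v, u) ∈ M) ∨ ((u, w) ∈ M ∨ (w, u) ∈ M) ∨ ((v, w) ∈ M ∨ (w, v) ∈ M) := by
  constructor
  · rintro ⟨⟨a, b⟩, hab, ha, hb⟩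
    have hne : a ≠ b := fun h => disjoint_left.1 hAB (hMAB _ hab).1 (h ▸ (hMAB _ hab).2)
    simp only [mem_insert, mem_singleton] at ha hb
    rcases ha with rfl | rfl | rfl <;> rcases hb with rfl | rfl | rfl <;> simp_all
  · rintro ((h | h) | (h | h) | (h | h)) <;> exact ⟨_, h, by simp, by simp⟩

/-- Two distinct pairs inside a triple share a vertex. -/
theorem ite_exists_pair_mem_triple {A B : Finset V} {M : Finset (V × V)} (hAB : Disjoint A B)
    (hMAB : ∀ p ∈ M, p.1 ∈ A ∧ p.2 ∈ B)
    (hMdisj : ∀ p ∈ M, ∀ q ∈ M, p ≠ q → p.1 ≠ q.1 ∧ p.2 ≠ q.2) {u v w : V}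
    (huv : u ≠ v) (huw : u ≠ w) (hvw : v ≠ w) :
    (if ∃ p ∈ M, p.1 ∈ ({u, v, w} : Finset V) ∧ p.2 ∈ ({u, v, w} : Finset V) then 1 else 0 : ℤ) =
      pairInd M u v + pairInd M u w + pairInd M v w := by
  have h12 := not_two_pairs_through_vertex hAB hMAB hMdisj (a := u) hvw
  have h13 := not_two_pairs_through_vertex hAB hMAB hMdisj (a := v) huw
  have h23 := not_two_pairs_through_vertex hAB hMAB hMdisj (a := w) huv
  rw [@or_comm ((v, u) ∈ M)] at h13
  rw [@or_comm ((w, u) ∈ M), @or_comm ((w, v) ∈ M)] at h23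
  simp only [exists_pair_mem_triple_iff hAB hMAB, pairInd]
  exact ite_or_or_eq_add h12 h13 h23

theorem ite_meets_both {A B : Finset V} (hAB : Disjoint A B) {u v w : V}
    (hu : u ∈ A ∪ B) (hv : v ∈ A ∪ B) (hw : w ∈ A ∪ B) :
    (if (({u, v, w} : Finset V) ∩ A).Nonempty ∧ (({u, v, w} : Finset V) ∩ B).Nonempty
      then 1 else 0 : ℤ) =
      1 - memInd A u * memInd A v * memInd A w - memInd B u * memInd B v * memInd B w := by
  have hAB' := disjoint_left.1 hAB
  rcases mem_union.1 hu with hu | hu <;> rcases mem_union.1 hv with hv | hv <;>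
    rcases mem_union.1 hw with hw | hw <;>
    simp [memInd, Finset.Nonempty, hu, hv, hw, hAB', disjoint_right.1 hAB]

theorem pair_mem_triple_meets_both {A B : Finset V} {M : Finset (V × V)}
    (hMAB : ∀ p ∈ M, p.1 ∈ A ∧ p.2 ∈ B) {T : Finset V}
    (h : ∃ p ∈ M, p.1 ∈ T ∧ p.2 ∈ T) : (T ∩ A).Nonempty ∧ (T ∩ B).Nonempty := by
  obtain ⟨p, hp, h1, h2⟩ := h
  exact ⟨⟨p.1, mem_inter.2 ⟨h1, (hMAB p hp).1⟩⟩, ⟨p.2, mem_inter.2 ⟨h2, (hMAB p hp).2⟩⟩⟩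

theorem gabmInd_eq {A B : Finset V} {M : Finset (V × V)} (hAB : Disjoint A B)
    (hMAB : ∀ p ∈ M, p.1 ∈ A ∧ p.2 ∈ B)
    (hMdisj : ∀ p ∈ M, ∀ q ∈ M, p ≠ q → p.1 ≠ q.1 ∧ p.2 ≠ q.2) {u v w : V}
    (hu : u ∈ A ∪ B) (hv : v ∈ A ∪ B) (hw : w ∈ A ∪ B)
    (huv : u ≠ v) (huw : u ≠ w) (hvw : v ≠ w) :
    gabmInd A B M u v w =
      1 - memInd A u * memInd A v * memInd A w - memInd B u * memInd B v * memInd B w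
        - (pairInd M u v + pairInd M u w + pairInd M v w) := by
  rw [← ite_meets_both hAB hu hv hw, ← ite_exists_pair_mem_triple hAB hMAB hMdisj huv huw hvw,
    ← ite_and_not_eq_sub (pair_mem_triple_meets_both hMAB)]
  simp only [gabmInd, not_exists, not_and, and_assoc]

theorem gabmInd_eq_add {A B : Finset V} {M : Finset (V × V)} (hAB : Disjoint A B)
    (hMAB : ∀ p ∈ M, p.1 ∈ A ∧ p.2 ∈ B)
    (hMdisj : ∀ p ∈ M, ∀ q ∈ M, p ≠ q → p.1 ≠ q.1 ∧ p.2 ≠ q.2) {u v w : V}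
    (hu : u ∈ A ∪ B) (hv : v ∈ A ∪ B) (hw : w ∈ A ∪ B)
    (huv : u ≠ v) (huw : u ≠ w) (hvw : v ≠ w) :
    gabmInd A B M u v w =
      (memInd A u + memInd A v - memInd A u * memInd A v - pairInd M u v)
        + (memInd A w - memInd A u * memInd A w - pairInd M u w)
        + (-(memInd A v * memInd A w) - pairInd M v w) := by
  rw [gabmInd_eq hAB hMAB hMdisj hu hv hw huv huw hvw, memInd_of_mem_union hAB hu,
    memInd_of_mem_union hAB hv, memInd_of_mem_union hAB hw]
  ring

end

theorem stmt13_general {V : Type*} [DecidableEq V] (A B : Finset V) (hAB : Disjoint A B)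
    (M : Finset (V × V)) (hMAB : ∀ p ∈ M, p.1 ∈ A ∧ p.2 ∈ B)
    (hMdisj : ∀ p ∈ M, ∀ q ∈ M, p ≠ q → p.1 ≠ q.1 ∧ p.2 ≠ q.2)
    (x x' y y' z z' : V)
    (hmem : ∀ u ∈ ([x, x', y, y', z, z'] : List V), u ∈ A ∪ B)
    (hnodup : ([x, x', y, y', z, z'] : List V).Nodup) :
    gabmInd A B M x y z - gabmInd A B M x y z' - gabmInd A B M x y' z
        - gabmInd A B M x' y z + gabmInd A B M x y' z' + gabmInd A B M x' y z'
        + gabmInd A B M x' y' z - gabmInd A B M x' y' z' = 0 := by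
  simp only [List.mem_cons, List.not_mem_nil, or_false, forall_eq_or_imp, forall_eq] at hmem
  simp only [List.nodup_cons, List.mem_cons, List.not_mem_nil, or_false, not_or,
    List.nodup_nil, and_true] at hnodup
  refine box_sum_eq_zero_of_eq_add (gabmInd A B M)
    (fun u v => memInd A u + memInd A v - memInd A u * memInd A v - pairInd M u v)
    (fun u w => memInd A w - memInd A u * memInd A w - pairInd M u w)
    (fun v w => -(memInd A v * memInd A w) - pairInd M v w) x x' y y' z z' ?_
  simp only [Set.mem_insert_iff, Set.mem_singleton_iff]
  rintro u (rfl | rfl) v (rfl | rfl) w (rfl | rfl) <;>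
    exact gabmInd_eq_add hAB hMAB hMdisj (by tauto) (by tauto) (by tauto) (by tauto) (by tauto)
      (by tauto)

/-- the 3-graph `G_{A,B,M}` (with `A, B` disjoint of size at least 5 and
`M ⊆ A × B` a set of pairwise disjoint pairs) is `𝓕`-free: for any six distinct vertices
`x, x', y, y', z, z'` the signed sum of edge indicators vanishes. -/
theorem stmt13 {V : Type*} [DecidableEq V] (A B : Finset V) (hAB : Disjoint A B)
    (hA : 5 ≤ A.card) (hB : 5 ≤ B.card)
    (M : Finset (V × V)) (hMAB : ∀ p ∈ M, p.1 ∈ A ∧ p.2 ∈ B)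
    (hMdisj : ∀ p ∈ M, ∀ q ∈ M, p ≠ q → p.1 ≠ q.1 ∧ p.2 ≠ q.2)
    (x x' y y' z z' : V)
    (hmem : ∀ u ∈ ([x, x', y, y', z, z'] : List V), u ∈ A ∪ B)
    (hnodup : ([x, x', y, y', z, z'] : List V).Nodup) :
    gabmInd A B M x y z - gabmInd A B M x y z' - gabmInd A B M x y' z
        - gabmInd A B M x' y z + gabmInd A B M x y' z' + gabmInd A B M x' y z'
        + gabmInd A B M x' y' z - gabmInd A B M x' y' z' = 0 :=
  stmt13_general A B hAB M hMAB hMdisj x x' y y' z z' hmem hnodup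
end

section
/- Let $G' = G_{A,B,\emptyset}$ be the complete bipartite-style 3-graph on disjoint sets $A$ and $B$ with $|A| + |B| = n$ (edges are all triples intersecting both $A$ and $B$). Then for any vertices $x, y' \in A$ and $x', y \in B$ with $x, x', y, y'$ distinct, we have $|\deg_{G'}(x,y) - \deg_{G'}(x',y) - \deg_{G'}(x,y') + \deg_{G'}(x',y')| = n - 4$, where $\deg_{G'}(u,v)$ is the number of edges of $G'$ containing both $u$ and $v$. -/
/-!
A pair `{u, v}` with `u ∈ A`, `v ∈ B` already meets both sides, so every third vertex completes
it to an edge and its codegree is `n - 2`. A pair inside `A` needs its third vertex in `B`, so its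
codegree is `|B|`, and symmetrically a pair inside `B` has codegree `|A|`. The alternating sum is
therefore `2(n - 2) - |A| - |B| = n - 4`.
-/

open Finset
open scoped Classical

/-- The codegree `deg(u,v)` in the 3-graph `G_{A,B,∅}`: the number of vertices `w` with
`w ∉ {u,v}` such that the triple `{u,v,w}` meets both `A` and `B`. -/
noncomputable def codegAB {V : Type*} [DecidableEq V] [Fintype V] (A B : Finset V)
    (u v : V) : ℕ :=
  (Finset.univ.filter (fun w => w ≠ u ∧ w ≠ v ∧
    (({u, v, w} : Finset V) ∩ A).Nonempty ∧ (({u, v, w} : Finset V) ∩ B).Nonempty)).card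

section

variable {V : Type*} [DecidableEq V] [Fintype V] (A B : Finset V)

theorem codegAB_comm (u v : V) : codegAB A B u v = codegAB A B v u := by
  unfold codegAB
  congr 1
  ext w
  simp only [mem_filter, mem_univ, true_and, insert_comm u v]
  tauto

theorem codegAB_swap (u v : V) : codegAB A B u v = codegAB B A u v := by
  unfold codegAB
  congr 1
  ext w
  simp only [mem_filter, mem_univ, true_and]
  tauto

theorem codegAB_eq_card_sub_two {u v : V} (hu : u ∈ A) (hv : v ∈ B) (huv : u ≠ v) :
    codegAB A B u v = Fintype.card V - 2 := by
  have hpair : (univ.filter fun w => w ≠ u ∧ w ≠ v ∧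
      (({u, v, w} : Finset V) ∩ A).Nonempty ∧ (({u, v, w} : Finset V) ∩ B).Nonempty)
      = ({u, v} : Finset V)ᶜ := by
    ext w
    simp only [mem_filter, mem_univ, true_and, mem_compl, mem_insert, mem_singleton, not_or]
    exact ⟨fun h => ⟨h.1, h.2.1⟩,
      fun h => ⟨h.1, h.2, ⟨u, by simp [hu]⟩, ⟨v, by simp [hv]⟩⟩⟩
  rw [codegAB, hpair, card_compl, card_pair huv]

theorem codegAB_eq_card_of_mem_of_mem (hdisj : Disjoint A B) {u v : V} (hu : u ∈ A)
    (hv : v ∈ A) :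
    codegAB A B u v = #B := by
  unfold codegAB
  congr 1
  ext w
  simp only [mem_filter, mem_univ, true_and]
  constructor
  · rintro ⟨-, -, -, z, hz⟩
    simp only [mem_inter, mem_insert, mem_singleton] at hz
    rcases hz with ⟨rfl | rfl | rfl, hzB⟩
    · exact absurd hzB (disjoint_left.mp hdisj hu)
    · exact absurd hzB (disjoint_left.mp hdisj hv)
    · exact hzB
  · intro hw
    exact ⟨fun h => disjoint_left.mp hdisj (h ▸ hu) hw,
      fun h => disjoint_left.mp hdisj (h ▸ hv) hw, ⟨u, by simp [hu]⟩, ⟨w, by simp [hw]⟩⟩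

end

/-- in `G' = G_{A,B,∅}` on `n` vertices, for distinct `x, y' ∈ A` and
`x', y ∈ B` we have `|deg(x,y) - deg(x',y) - deg(x,y') + deg(x',y')| = n - 4`. -/
theorem stmt14 {V : Type*} [DecidableEq V] [Fintype V] (A B : Finset V)
    (hdisj : Disjoint A B) (hcover : A ∪ B = Finset.univ)
    (x y' : V) (hx : x ∈ A) (hy' : y' ∈ A)
    (x' y : V) (hx' : x' ∈ B) (hy : y ∈ B)
    (hnodup : ([x, x', y, y'] : List V).Nodup) :
    |(codegAB A B x y : ℤ) - (codegAB A B x' y : ℤ) - (codegAB A B x y' : ℤ)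
        + (codegAB A B x' y' : ℤ)| = (Fintype.card V : ℤ) - 4 := by
  have hn : 4 ≤ Fintype.card V := hnodup.length_le_card
  have hAB : #A + #B = Fintype.card V := by
    rw [← card_union_of_disjoint hdisj, hcover, card_univ]
  have hxy : x ≠ y := fun h => by simp [h] at hnodup
  have hy'x' : y' ≠ x' := fun h => by simp [h] at hnodup
  have hxy_codeg := codegAB_eq_card_sub_two A B hx hy hxy
  have hx'y_codeg : codegAB A B x' y = #A := by
    rw [codegAB_swap, codegAB_eq_card_of_mem_of_mem B A hdisj.symm hx' hy]
  have hxy'_codeg := codegAB_eq_card_of_mem_of_mem A B hdisj hx hy'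
  have hx'y'_codeg : codegAB A B x' y' = Fintype.card V - 2 := by
    rw [codegAB_comm, codegAB_eq_card_sub_two A B hy' hx' hy'x']
  rw [hxy_codeg, hx'y_codeg, hxy'_codeg, hx'y'_codeg, abs_eq_self.mpr] <;> omega
end

section
/- Fix a 6-element vertex set $\{x, x', y, y', z, z'\}$, and let $\mathcal{F}$ be the family of 3-uniform hypergraphs $F$ on this vertex set for which $a_{xyz} - a_{xyz'} - a_{xy'z} - a_{x'yz} + a_{xy'z'} + a_{x'yz'} + a_{x'y'z} - a_{x'y'z'} \ne 0$ (where $a$ is the edge indicator of $F$). Let $G$ be an $\mathcal{F}$-free 3-graph, let $v$ be a vertex, and suppose $G - v = G_{A,B,M}$ with $|A|, |B| \ge 5$, where $M \subseteq A \times B$ is a set of disjoint pairs. Then there exist $A' \supseteq A$, $B' \supseteq B$ partitioning $V(G)$ and disjoint pairs $M' \supseteq M$, $M' \subseteq A' \times B'$, such that $G = G_{A', B', M'}$. -/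
/-!
Put `z = v` in the identity defining `𝓕`. The link of `v` (the pairs `pq` with `vpq ∈ G`) is
then tied to edges of `G - v = G_{A,B,M}`, which are explicit once the sixth vertex is taken in
`A` and unmatched. Writing `[vab ∈ G] + [ab ∈ M] = φ a + ψ b` for the weight of a cross pair,
the relations say that link pairs inside `A` and inside `B` are `φ a + φ a' + k` and
`ψ b + ψ b' - k - 1`. Since these are `0` or `1`, `φ` and `ψ` are constant off one vertex each,
and after a shift `k ∈ {0, 1}`. The link has an edge inside `A` or inside `B` (otherwise three of
the relations add up to `2n = 3`); by the symmetry `A ↔ B` say inside `B`, which forces `k = 0`.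
As `M` is a matching, no vertex carries weight `2` towards all but one vertex of the other side;
this makes `φ ≡ 0` and `ψ ∈ {0, 1}`, and `v` joins `A`, matched to the vertex with `ψ = 0`
if there is one.
-/

open Finset

section Generic

variable {V : Type*}

def IsMatching (M : Finset (V × V)) : Prop :=
  ∀ p ∈ M, ∀ q ∈ M, p ≠ q → p.1 ≠ q.1 ∧ p.2 ≠ q.2

theorem IsMatching.fst_eq_of_snd_eq {M : Finset (V × V)} (hM : IsMatching M) {a a' b : V}
    (h : (a, b) ∈ M) (h' : (a', b) ∈ M) : a = a' := by
  by_contra hne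
  exact (hM _ h _ h' (by simp [hne])).2 rfl

theorem IsMatching.snd_eq_of_fst_eq {M : Finset (V × V)} (hM : IsMatching M) {a b b' : V}
    (h : (a, b) ∈ M) (h' : (a, b') ∈ M) : b = b' := by
  by_contra hne
  exact (hM _ h _ h' (by simp [hne])).1 rfl

theorem exists_two_ne_of_three_le_card {α : Type*} [DecidableEq α] {s : Finset α}
    (hs : 3 ≤ s.card) (w : α) :
    ∃ a ∈ s, ∃ a' ∈ s, a ≠ a' ∧ a ≠ w ∧ a' ≠ w := by
  obtain ⟨a, ha, a', ha', haa'⟩ := one_lt_card.mp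
    (show 1 < (s.erase w).card by rw [card_erase_eq_ite]; split_ifs <;> omega)
  rw [mem_erase] at ha ha'
  exact ⟨a, ha.2, a', ha'.2, haa', ha.1, ha'.1⟩

theorem exists_eq_insert_pair_of_card_eq_three {α : Type*} [DecidableEq α] {e : Finset α}
    {v : α} (he : e.card = 3) (hv : v ∈ e) :
    ∃ p q, p ≠ q ∧ p ≠ v ∧ q ≠ v ∧ e = {v, p, q} := by
  obtain ⟨p, q, hpq, hpq'⟩ := card_eq_two.mp (by rw [card_erase_of_mem hv, he] :
    (e.erase v).card = 2)
  have hp : p ∈ e.erase v := by rw [hpq']; simp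
  have hq : q ∈ e.erase v := by rw [hpq']; simp
  exact ⟨p, q, hpq, ne_of_mem_erase hp, ne_of_mem_erase hq, by rw [← hpq', insert_erase hv]⟩

theorem eq_add_sub_of_rectangle {α β G : Type*} [AddCommGroup G] {s : Finset α} {t : Finset β}
    (f : α → β → G)
    (hf : ∀ x ∈ s, ∀ x' ∈ s, ∀ y ∈ t, ∀ y' ∈ t, x ≠ x' → y ≠ y' →
      f x y + f x' y' = f x y' + f x' y)
    {x₀ : α} {y₀ : β} (hx₀ : x₀ ∈ s) (hy₀ : y₀ ∈ t) {x : α} {y : β}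
    (hx : x ∈ s) (hy : y ∈ t) :
    f x y = f x y₀ + f x₀ y - f x₀ y₀ := by
  rcases eq_or_ne x x₀ with rfl | hxx
  · abel
  rcases eq_or_ne y y₀ with rfl | hyy
  · abel
  rw [← hf x hx x₀ hx₀ y hy y₀ hy₀ hxx hyy]
  abel

theorem exists_forall_ne_eq_of_pair_sum_bounds {α : Type*} {s : Finset α} (hs : 3 ≤ s.card)
    (f : α → ℤ) (c : ℤ)
    (h : ∀ x ∈ s, ∀ y ∈ s, x ≠ y → c ≤ f x + f y ∧ f x + f y ≤ c + 1) :
    ∃ t w, ∀ x ∈ s, x ≠ w → f x = t := by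
  obtain ⟨x₁, h₁, x₂, h₂, x₃, h₃, h12, h13, h23⟩ := two_lt_card.mp hs
  obtain ⟨p, hp, q, hq, hpq, hfpq⟩ : ∃ p ∈ s, ∃ q ∈ s, p ≠ q ∧ f p = f q := by
    have := h _ h₁ _ h₂ h12
    have := h _ h₁ _ h₃ h13
    have := h _ h₂ _ h₃ h23
    rcases (by omega : f x₁ = f x₂ ∨ f x₁ = f x₃ ∨ f x₂ = f x₃) with e | e | e
    exacts [⟨_, h₁, _, h₂, h12, e⟩, ⟨_, h₁, _, h₃, h13, e⟩,
      ⟨_, h₂, _, h₃, h23, e⟩]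
  by_cases hall : ∀ x ∈ s, f x = f p
  · exact ⟨f p, p, fun x hx _ => hall x hx⟩
  obtain ⟨w, hw, hfw⟩ := not_forall₂.mp hall
  refine ⟨f p, w, fun x hx hxw => ?_⟩
  by_contra hfx
  have := h p hp q hq hpq
  have := h p hp x hx (by rintro rfl; exact hfx rfl)
  have := h p hp w hw (by rintro rfl; exact hfw rfl)
  have := h x hx w hw hxw
  omega

variable [DecidableEq V]

def IsFFree (G : Finset (Finset V)) : Prop :=
  ∀ x x' y y' z z' : V, ([x, x', y, y', z, z'] : List V).Nodup →
    ((if ({x, y, z} : Finset V) ∈ G then (1 : ℤ) else 0)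
      - (if ({x, y, z'} : Finset V) ∈ G then 1 else 0)
      - (if ({x, y', z} : Finset V) ∈ G then 1 else 0)
      - (if ({x', y, z} : Finset V) ∈ G then 1 else 0)
      + (if ({x, y', z'} : Finset V) ∈ G then 1 else 0)
      + (if ({x', y, z'} : Finset V) ∈ G then 1 else 0)
      + (if ({x', y', z} : Finset V) ∈ G then 1 else 0)
      - (if ({x', y', z'} : Finset V) ∈ G then 1 else 0)) = 0

/-- `e` is an edge of `G_{A,B,M}`. -/
def IsABMEdge (A B : Finset V) (M : Finset (V × V)) (e : Finset V) : Prop :=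
  (e ∩ A).Nonempty ∧ (e ∩ B).Nonempty ∧ ∀ p ∈ M, ¬(p.1 ∈ e ∧ p.2 ∈ e)

theorem IsMatching.image_swap {M : Finset (V × V)} (hM : IsMatching M) :
    IsMatching (M.image Prod.swap) := by
  simp only [IsMatching, mem_image]
  rintro _ ⟨p, hp, rfl⟩ _ ⟨q, hq, rfl⟩ hpq
  exact (hM p hp q hq (by rintro rfl; exact hpq rfl)).symm

theorem IsMatching.union_singleton_product {M : Finset (V × V)} (hM : IsMatching M) {v : V}
    {U : Finset V} (hU : U.card ≤ 1) (hv : ∀ p ∈ M, p.1 ≠ v)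
    (hUM : ∀ p ∈ M, p.2 ∉ U) :
    IsMatching (M ∪ {v} ×ˢ U) := by
  intro p hp q hq hpq
  simp only [mem_union, mem_product, mem_singleton] at hp hq
  rcases hp with hp | ⟨hp1, hp2⟩ <;> rcases hq with hq | ⟨hq1, hq2⟩
  · exact hM p hp q hq hpq
  · exact ⟨hq1 ▸ hv p hp, fun h => hUM p hp (h ▸ hq2)⟩
  · exact ⟨hp1 ▸ (hv q hq).symm, fun h => hUM q hq (h ▸ hp2)⟩
  · exact absurd (Prod.ext (hp1.trans hq1.symm) (card_le_one.mp hU _ hp2 _ hq2)) hpq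

section IsABMEdge

variable {A B : Finset V} {M : Finset (V × V)} {e : Finset V}

theorem isABMEdge_image_swap :
    IsABMEdge B A (M.image Prod.swap) e ↔ IsABMEdge A B M e := by
  simp only [IsABMEdge, mem_image, forall_exists_index, and_imp, forall_apply_eq_imp_iff₂,
    Prod.fst_swap, Prod.snd_swap]
  tauto

theorem not_isABMEdge_of_subset (hAB : Disjoint A B) (he : e ⊆ A) : ¬IsABMEdge A B M e := by
  rintro ⟨-, ⟨x, hx⟩, -⟩
  rw [mem_inter] at hx
  exact disjoint_left.mp hAB (he hx.1) hx.2

theorem isABMEdge_insert_union_iff {v : V} {U : Finset V} (hv : v ∉ e) :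
    IsABMEdge (insert v A) B (M ∪ {v} ×ˢ U) e ↔ IsABMEdge A B M e := by
  simp only [IsABMEdge, inter_insert_of_notMem hv, mem_union, mem_product, mem_singleton]
  refine and_congr_right' (and_congr_right' ⟨fun h p hp => h p (.inl hp), ?_⟩)
  rintro h p (hp | ⟨hp1, -⟩) ⟨hpe, hpe'⟩
  exacts [h p hp ⟨hpe, hpe'⟩, hv (hp1 ▸ hpe)]

theorem isABMEdge_AAB_iff (hAB : Disjoint A B) (hM : ∀ p ∈ M, p.1 ∈ A ∧ p.2 ∈ B)
    {a a' b : V} (ha : a ∈ A) (ha' : a' ∈ A) (hb : b ∈ B) :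
    IsABMEdge A B M {a, a', b} ↔ (a, b) ∉ M ∧ (a', b) ∉ M := by
  have hd := disjoint_left.mp hAB
  refine ⟨fun ⟨_, _, h⟩ => ⟨fun hm => h _ hm (by simp), fun hm => h _ hm (by simp)⟩, ?_⟩
  rintro ⟨h1, h2⟩
  refine ⟨⟨a, by simp [ha]⟩, ⟨b, by simp [hb]⟩, ?_⟩
  rintro ⟨p, q⟩ hpq ⟨hp, hq⟩
  obtain ⟨hpA, hqB⟩ := hM _ hpq
  simp only [mem_insert, mem_singleton] at hp hq
  rcases hq with rfl | rfl | rfl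
  · exact hd ha hqB
  · exact hd ha' hqB
  rcases hp with rfl | rfl | rfl
  exacts [h1 hpq, h2 hpq, hd hpA hb]

theorem isABMEdge_ABB_iff (hAB : Disjoint A B) (hM : ∀ p ∈ M, p.1 ∈ A ∧ p.2 ∈ B)
    {a b b' : V} (ha : a ∈ A) (hb : b ∈ B) (hb' : b' ∈ B) :
    IsABMEdge A B M {a, b, b'} ↔ (a, b) ∉ M ∧ (a, b') ∉ M := by
  have hd := disjoint_left.mp hAB
  refine ⟨fun ⟨_, _, h⟩ => ⟨fun hm => h _ hm (by simp), fun hm => h _ hm (by simp)⟩, ?_⟩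
  rintro ⟨h1, h2⟩
  refine ⟨⟨a, by simp [ha]⟩, ⟨b, by simp [hb]⟩, ?_⟩
  rintro ⟨p, q⟩ hpq ⟨hp, hq⟩
  obtain ⟨hpA, hqB⟩ := hM _ hpq
  simp only [mem_insert, mem_singleton] at hp hq
  rcases hp with rfl | rfl | rfl
  · rcases hq with rfl | rfl | rfl
    exacts [hd hpA hqB, h1 hpq, h2 hpq]
  · exact hd hpA hb
  · exact hd hpA hb'

end IsABMEdge

end Generic

structure FFreeExtension (V : Type*) [DecidableEq V] [Fintype V] where
  G : Finset (Finset V)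
  v : V
  A : Finset V
  B : Finset V
  M : Finset (V × V)
  isFFree : IsFFree G
  union_eq : A ∪ B = univ.erase v
  disjoint : Disjoint A B
  five_le_card_A : 5 ≤ A.card
  five_le_card_B : 5 ≤ B.card
  mem_of_mem_M : ∀ p ∈ M, p.1 ∈ A ∧ p.2 ∈ B
  isMatching : IsMatching M
  mem_iff : ∀ e : Finset V, e.card = 3 → v ∉ e → (e ∈ G ↔ IsABMEdge A B M e)

namespace FFreeExtension

variable {V : Type*} [DecidableEq V] [Fintype V] (S : FFreeExtension V)

def IsExtendable : Prop :=
  ∃ (A' B' : Finset V) (M' : Finset (V × V)),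
    S.A ⊆ A' ∧ S.B ⊆ B' ∧ S.M ⊆ M' ∧ A' ∪ B' = univ ∧ Disjoint A' B' ∧
    (∀ p ∈ M', p.1 ∈ A' ∧ p.2 ∈ B') ∧ IsMatching M' ∧
    ∀ e : Finset V, e.card = 3 → (e ∈ S.G ↔ IsABMEdge A' B' M' e)

def swap : FFreeExtension V where
  G := S.G
  v := S.v
  A := S.B
  B := S.A
  M := S.M.image Prod.swap
  isFFree := S.isFFree
  union_eq := union_comm S.B S.A ▸ S.union_eq
  disjoint := S.disjoint.symm
  five_le_card_A := S.five_le_card_B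
  five_le_card_B := S.five_le_card_A
  mem_of_mem_M := by
    simp only [mem_image]
    rintro _ ⟨p, hp, rfl⟩
    exact (S.mem_of_mem_M p hp).symm
  isMatching := S.isMatching.image_swap
  mem_iff e he hv := (S.mem_iff e he hv).trans isABMEdge_image_swap.symm

theorem IsExtendable.of_swap (h : S.swap.IsExtendable) : S.IsExtendable := by
  obtain ⟨B', A', M', hB, hA, hM, hunion, hdisj, hM', hmatch, hedge⟩ := h
  refine ⟨A', B', M'.image Prod.swap, hA, hB, fun p hp => ?_, union_comm A' B' ▸ hunion,
    hdisj.symm, ?_, hmatch.image_swap, fun e he => (hedge e he).trans isABMEdge_image_swap.symm⟩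
  · exact mem_image.mpr ⟨p.swap, hM (mem_image_of_mem _ hp), p.swap_swap⟩
  · simp only [mem_image]
    rintro _ ⟨p, hp, rfl⟩
    exact (hM' p hp).symm

theorem v_notMem_union : S.v ∉ S.A ∪ S.B := by simp [S.union_eq]

theorem v_notMem_A : S.v ∉ S.A := fun h => S.v_notMem_union (mem_union_left S.B h)

theorem v_notMem_B : S.v ∉ S.B := fun h => S.v_notMem_union (mem_union_right S.A h)

theorem mem_A_or_mem_B {p : V} (hp : p ≠ S.v) : p ∈ S.A ∨ p ∈ S.B := by
  rw [← mem_union, S.union_eq]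
  simp [hp]

theorem notMem_B_of_mem_A {a : V} (ha : a ∈ S.A) : a ∉ S.B := disjoint_left.mp S.disjoint ha

theorem mem_G_iff {e : Finset V} (he : e.card = 3) (heAB : e ⊆ S.A ∪ S.B) :
    e ∈ S.G ↔ IsABMEdge S.A S.B S.M e :=
  S.mem_iff e he fun hv => S.v_notMem_union (heAB hv)

def link (p q : V) : ℤ := if ({S.v, p, q} : Finset V) ∈ S.G then 1 else 0

def tri (p q r : V) : ℤ := if ({p, q, r} : Finset V) ∈ S.G then 1 else 0

def m (a b : V) : ℤ := if (a, b) ∈ S.M then 1 else 0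

def weight (a b : V) : ℤ := S.link a b + S.m a b

theorem link_nonneg (p q : V) : 0 ≤ S.link p q := by unfold link; split_ifs <;> simp

theorem link_le_one (p q : V) : S.link p q ≤ 1 := by unfold link; split_ifs <;> simp

theorem link_eq_one_iff {p q : V} : S.link p q = 1 ↔ ({S.v, p, q} : Finset V) ∈ S.G := by
  unfold link; split_ifs <;> simp_all

theorem link_comm (p q : V) : S.link p q = S.link q p := by
  rw [link, link, pair_comm]

theorem m_eq_one_iff {a b : V} : S.m a b = 1 ↔ (a, b) ∈ S.M := by
  unfold m; split_ifs <;> simp_all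

theorem m_nonneg (a b : V) : 0 ≤ S.m a b := by unfold m; split_ifs <;> simp

theorem m_le_one (a b : V) : S.m a b ≤ 1 := by unfold m; split_ifs <;> simp

theorem link_alternating_sum {x x' y y' z : V} (h : [x, x', y, y', S.v, z].Nodup) :
    S.link x y - S.link x y' - S.link x' y + S.link x' y' =
      S.tri x y z - S.tri x y' z - S.tri x' y z + S.tri x' y' z := by
  have H := S.isFFree x x' y y' S.v z h
  have rot : ∀ p q : V, ({p, q, S.v} : Finset V) = {S.v, p, q} := fun p q => by
    ext; simp only [mem_insert, mem_singleton]; tauto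
  simp only [rot] at H
  simp only [link, tri]
  linarith

theorem exists_mem_A_unmatched (x x' y y' : V) :
    ∃ z ∈ S.A, z ≠ x ∧ z ≠ x' ∧ (z, y) ∉ S.M ∧ (z, y') ∉ S.M := by
  have partners_card (b : V) : (S.A.filter fun a => (a, b) ∈ S.M).card ≤ 1 :=
    card_le_one.mpr fun a ha a' ha' =>
      S.isMatching.fst_eq_of_snd_eq (mem_filter.mp ha).2 (mem_filter.mp ha').2
  -- `x`, `x'` and the partners of `y`, `y'` are at most four of the `≥ 5` vertices of `A`
  have hcard : ({x, x'} ∪ (S.A.filter fun a => (a, y) ∈ S.M) ∪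
      (S.A.filter fun a => (a, y') ∈ S.M)).card < S.A.card := by
    have := card_union_le ({x, x'} ∪ (S.A.filter fun a => (a, y) ∈ S.M))
      (S.A.filter fun a => (a, y') ∈ S.M)
    have := card_union_le {x, x'} (S.A.filter fun a => (a, y) ∈ S.M)
    have := card_le_two (a := x) (b := x')
    have := partners_card y
    have := partners_card y'
    have := S.five_le_card_A
    omega
  obtain ⟨z, hz, hzT⟩ := exists_mem_notMem_of_card_lt_card hcard
  simp only [mem_union, mem_insert, mem_singleton, mem_filter, not_or, not_and] at hzT
  exact ⟨z, hz, hzT.1.1.1, hzT.1.1.2, hzT.1.2 hz, hzT.2 hz⟩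

theorem ne_of_mem_A_of_mem_B {a b : V} (ha : a ∈ S.A) (hb : b ∈ S.B) : a ≠ b :=
  fun h => S.notMem_B_of_mem_A ha (h ▸ hb)

theorem ne_v_of_mem_A {a : V} (ha : a ∈ S.A) : a ≠ S.v := fun h => S.v_notMem_A (h ▸ ha)

theorem ne_v_of_mem_B {b : V} (hb : b ∈ S.B) : b ≠ S.v := fun h => S.v_notMem_B (h ▸ hb)

theorem tri_eq_zero {a a' a'' : V} (ha : a ∈ S.A) (ha' : a' ∈ S.A) (ha'' : a'' ∈ S.A)
    (h₁ : a ≠ a') (h₂ : a ≠ a'') (h₃ : a' ≠ a'') : S.tri a a' a'' = 0 := by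
  have hsub : ({a, a', a''} : Finset V) ⊆ S.A := by simp [insert_subset_iff, ha, ha', ha'']
  have hG := (S.mem_G_iff (card_eq_three.mpr ⟨a, a', a'', h₁, h₂, h₃, rfl⟩)
    (hsub.trans subset_union_left)).not.mpr (not_isABMEdge_of_subset S.disjoint hsub)
  simp [tri, hG]

theorem tri_eq_one_sub_m {a b z : V} (ha : a ∈ S.A) (hb : b ∈ S.B) (hz : z ∈ S.A)
    (haz : a ≠ z) (hzb : (z, b) ∉ S.M) : S.tri a b z = 1 - S.m a b := by
  have hG : ({a, b, z} : Finset V) ∈ S.G ↔ (a, b) ∉ S.M := by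
    rw [pair_comm b z, S.mem_G_iff
      (card_eq_three.mpr ⟨a, z, b, haz, S.ne_of_mem_A_of_mem_B ha hb,
        S.ne_of_mem_A_of_mem_B hz hb, rfl⟩) (by simp [insert_subset_iff, ha, hb, hz]),
      isABMEdge_AAB_iff S.disjoint S.mem_of_mem_M ha hz hb]
    simp [hzb]
  unfold tri m
  by_cases hab : (a, b) ∈ S.M <;> simp_all

theorem tri_eq_one {b b' z : V} (hb : b ∈ S.B) (hb' : b' ∈ S.B) (hz : z ∈ S.A)
    (hbb' : b ≠ b') (hzb : (z, b) ∉ S.M) (hzb' : (z, b') ∉ S.M) : S.tri b b' z = 1 := by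
  have hG : ({b, b', z} : Finset V) ∈ S.G := by
    rw [pair_comm b' z, insert_comm b z, S.mem_G_iff
      (card_eq_three.mpr ⟨z, b, b', S.ne_of_mem_A_of_mem_B hz hb,
        S.ne_of_mem_A_of_mem_B hz hb', hbb', rfl⟩) (by simp [insert_subset_iff, hb, hb', hz]),
      isABMEdge_ABB_iff S.disjoint S.mem_of_mem_M hz hb hb']
    exact ⟨hzb, hzb'⟩
  simp [tri, hG]

theorem weight_rectangle {x x' y y' : V} (hx : x ∈ S.A) (hx' : x' ∈ S.A) (hy : y ∈ S.B)
    (hy' : y' ∈ S.B) (hxx' : x ≠ x') (hyy' : y ≠ y') :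
    S.weight x y + S.weight x' y' = S.weight x y' + S.weight x' y := by
  obtain ⟨z, hz, hzx, hzx', hzy, hzy'⟩ := S.exists_mem_A_unmatched x x' y y'
  have H := S.link_alternating_sum (x := x) (x' := x') (y := y) (y' := y') (z := z) (by
    simp [List.nodup_cons, S.ne_of_mem_A_of_mem_B, (S.ne_of_mem_A_of_mem_B _ _).symm,
      S.ne_v_of_mem_A, S.ne_v_of_mem_B, (S.ne_v_of_mem_A _).symm, hzx.symm, hzx'.symm, *])
  rw [S.tri_eq_one_sub_m hx hy hz hzx.symm hzy, S.tri_eq_one_sub_m hx hy' hz hzx.symm hzy',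
    S.tri_eq_one_sub_m hx' hy hz hzx'.symm hzy, S.tri_eq_one_sub_m hx' hy' hz hzx'.symm hzy'] at H
  simp only [weight]
  linarith

theorem link_add_link {x y x' y' : V} (hx : x ∈ S.A) (hy : y ∈ S.A) (hx' : x' ∈ S.B)
    (hy' : y' ∈ S.B) (hxy : x ≠ y) (hxy' : x' ≠ y') :
    S.link x y + S.link x' y' = S.weight x y' + S.weight y x' - 1 := by
  obtain ⟨z, hz, hzx, hzy, hzx', hzy'⟩ := S.exists_mem_A_unmatched x y x' y'
  have H := S.link_alternating_sum (x := x) (x' := x') (y := y) (y' := y') (z := z) (by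
    simp [List.nodup_cons, S.ne_of_mem_A_of_mem_B, (S.ne_of_mem_A_of_mem_B _ _).symm,
      S.ne_v_of_mem_A, S.ne_v_of_mem_B, (S.ne_v_of_mem_A _).symm, hzx.symm, hzy.symm, *])
  have hswap : S.tri x' y z = S.tri y x' z := by rw [tri, tri, insert_comm]
  rw [S.tri_eq_zero hx hy hz hxy hzx.symm hzy.symm, S.tri_eq_one_sub_m hx hy' hz hzx.symm hzy',
    hswap, S.tri_eq_one_sub_m hy hx' hz hzy.symm hzx', S.tri_eq_one hx' hy' hz hxy' hzx' hzy',
    S.link_comm x' y] at H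
  simp only [weight]
  linarith

theorem exists_link_eq_one_in_B_or_A :
    (∃ b ∈ S.B, ∃ b' ∈ S.B, b ≠ b' ∧ S.link b b' = 1) ∨
      ∃ a ∈ S.A, ∃ a' ∈ S.A, a ≠ a' ∧ S.link a a' = 1 := by
  by_contra! h
  obtain ⟨hB, hA⟩ := h
  have zero_of_ne_one {p q : V} (h : S.link p q ≠ 1) : S.link p q = 0 := by
    have := S.link_nonneg p q; have := S.link_le_one p q; omega
  obtain ⟨a₁, ha₁, a₂, ha₂, a₃, ha₃, h₁₂, h₁₃, h₂₃⟩ :=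
    two_lt_card.mp (by linarith [S.five_le_card_A] : 2 < S.A.card)
  obtain ⟨b₁, hb₁, b₂, hb₂, b₃, hb₃, k₁₂, k₁₃, k₂₃⟩ :=
    two_lt_card.mp (by linarith [S.five_le_card_B] : 2 < S.B.card)
  have e₁ := S.link_add_link ha₁ ha₂ hb₃ hb₂ h₁₂ k₂₃.symm
  have e₂ := S.link_add_link ha₂ ha₃ hb₁ hb₃ h₂₃ k₁₃
  have e₃ := S.link_add_link ha₃ ha₁ hb₂ hb₁ h₁₃.symm k₁₂.symm
  rw [zero_of_ne_one (hA _ ha₁ _ ha₂ h₁₂),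
    zero_of_ne_one (hB _ hb₃ _ hb₂ k₂₃.symm)] at e₁
  rw [zero_of_ne_one (hA _ ha₂ _ ha₃ h₂₃),
    zero_of_ne_one (hB _ hb₁ _ hb₃ k₁₃)] at e₂
  rw [zero_of_ne_one (hA _ ha₃ _ ha₁ h₁₃.symm),
    zero_of_ne_one (hB _ hb₂ _ hb₁ k₁₂.symm)] at e₃
  omega

structure IsPotential (φ ψ : V → ℤ) (k : ℤ) : Prop where
  weight_eq : ∀ a ∈ S.A, ∀ b ∈ S.B, S.weight a b = φ a + ψ b
  link_A : ∀ a ∈ S.A, ∀ a' ∈ S.A, a ≠ a' → S.link a a' = φ a + φ a' + k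
  link_B : ∀ b ∈ S.B, ∀ b' ∈ S.B, b ≠ b' → S.link b b' + k + 1 = ψ b + ψ b'

theorem exists_isPotential : ∃ φ ψ k, S.IsPotential φ ψ k := by
  obtain ⟨a₀, ha₀, a₁, ha₁, ha⟩ :=
    one_lt_card.mp (by linarith [S.five_le_card_A] : 1 < S.A.card)
  obtain ⟨b₀, hb₀, b₁, hb₁, hb⟩ :=
    one_lt_card.mp (by linarith [S.five_le_card_B] : 1 < S.B.card)
  have hw (a) (ha : a ∈ S.A) (b) (hb : b ∈ S.B) :
      S.weight a b = S.weight a b₀ + (S.weight a₀ b - S.weight a₀ b₀) := by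
    rw [eq_add_sub_of_rectangle S.weight (fun x hx x' hx' y hy y' hy' =>
      S.weight_rectangle hx hx' hy hy') ha₀ hb₀ ha hb, add_sub_assoc]
  refine ⟨fun a => S.weight a b₀, fun b => S.weight a₀ b - S.weight a₀ b₀,
    S.link a₀ a₁ - S.weight a₀ b₀ - S.weight a₁ b₀, hw, fun x hx x' hx' hxx' => ?_,
    fun y hy y' hy' hyy' => ?_⟩
  · have := S.link_add_link hx hx' hb₁ hb₀ hxx' hb.symm
    have := S.link_add_link ha₀ ha₁ hb₁ hb₀ ha hb.symm
    have := hw x' hx' b₁ hb₁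
    have := hw a₁ ha₁ b₁ hb₁
    linarith
  · have := S.link_add_link ha₀ ha₁ hy hy' ha hyy'
    have := hw a₀ ha₀ y' hy'
    have := hw a₁ ha₁ y hy
    linarith

theorem weight_nonneg (a b : V) : 0 ≤ S.weight a b := by
  have := S.link_nonneg a b; have := S.m_nonneg a b; unfold weight; omega

theorem weight_le_two (a b : V) : S.weight a b ≤ 2 := by
  have := S.link_le_one a b; have := S.m_le_one a b; unfold weight; omega

theorem mem_M_of_weight_eq_two {a b : V} (h : S.weight a b = 2) : (a, b) ∈ S.M := by
  rw [← S.m_eq_one_iff]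
  have := S.link_le_one a b; have := S.m_le_one a b; unfold weight at h; omega

theorem not_forall_weight_eq_two_left (b w : V) :
    ¬∀ a ∈ S.A, a ≠ w → S.weight a b = 2 := by
  intro h
  obtain ⟨a, ha, a', ha', haa', haw, ha'w⟩ :=
    exists_two_ne_of_three_le_card (by linarith [S.five_le_card_A]) w
  exact haa' (S.isMatching.fst_eq_of_snd_eq (S.mem_M_of_weight_eq_two (h a ha haw))
    (S.mem_M_of_weight_eq_two (h a' ha' ha'w)))

theorem not_forall_weight_eq_two_right (a u : V) :
    ¬∀ b ∈ S.B, b ≠ u → S.weight a b = 2 := by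
  intro h
  obtain ⟨b, hb, b', hb', hbb', hbu, hb'u⟩ :=
    exists_two_ne_of_three_le_card (by linarith [S.five_le_card_B]) u
  exact hbb' (S.isMatching.snd_eq_of_fst_eq (S.mem_M_of_weight_eq_two (h b hb hbu))
    (S.mem_M_of_weight_eq_two (h b' hb' hb'u)))

namespace IsPotential

variable {S} {φ ψ : V → ℤ} {k : ℤ}

theorem shift (hP : S.IsPotential φ ψ k) (c : ℤ) :
    S.IsPotential (fun a => φ a - c) (fun b => ψ b + c) (k + 2 * c) where
  weight_eq a ha b hb := by rw [hP.weight_eq a ha b hb]; ring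
  link_A a ha a' ha' h := by rw [hP.link_A a ha a' ha' h]; ring
  link_B b hb b' hb' h := by linarith [hP.link_B b hb b' hb' h]

theorem zero_left (hP : S.IsPotential φ ψ 0) (hφ : ∀ a ∈ S.A, φ a = 0) :
    S.IsPotential 0 ψ 0 where
  weight_eq a ha b hb := by rw [hP.weight_eq a ha b hb, hφ a ha, Pi.zero_apply]
  link_A a ha a' ha' h := by simp [hP.link_A a ha a' ha' h, hφ a ha, hφ a' ha']
  link_B := hP.link_B

end IsPotential

theorem exists_isPotential_normalized :
    ∃ φ ψ k w u, S.IsPotential φ ψ k ∧ (∀ a ∈ S.A, a ≠ w → φ a = 0) ∧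
      (∀ b ∈ S.B, b ≠ u → ψ b = 1) ∧ (k = 0 ∨ k = 1) := by
  obtain ⟨φ, ψ, k, hP⟩ := S.exists_isPotential
  obtain ⟨t, w, hφ⟩ := exists_forall_ne_eq_of_pair_sum_bounds (by linarith [S.five_le_card_A])
    φ (-k) fun a ha a' ha' h => by
      have := hP.link_A a ha a' ha' h; have := S.link_nonneg a a'; have := S.link_le_one a a'
      constructor <;> linarith
  obtain ⟨s, u, hψ⟩ := exists_forall_ne_eq_of_pair_sum_bounds (by linarith [S.five_le_card_B])
    ψ (k + 1) fun b hb b' hb' h => by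
      have := hP.link_B b hb b' hb' h; have := S.link_nonneg b b'; have := S.link_le_one b b'
      constructor <;> linarith
  obtain ⟨a, ha, a', ha', haa', haw, ha'w⟩ :=
    exists_two_ne_of_three_le_card (by linarith [S.five_le_card_A]) w
  obtain ⟨b, hb, b', hb', hbb', hbu, hb'u⟩ :=
    exists_two_ne_of_three_le_card (by linarith [S.five_le_card_B]) u
  have hA := hP.link_A a ha a' ha' haa'
  have hB := hP.link_B b hb b' hb' hbb'
  rw [hφ a ha haw, hφ a' ha' ha'w] at hA
  rw [hψ b hb hbu, hψ b' hb' hb'u] at hB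
  have := S.link_nonneg a a'; have := S.link_le_one a a'
  have := S.link_nonneg b b'; have := S.link_le_one b b'
  refine ⟨_, _, _, w, u, hP.shift t, fun x hx hxw => by simp [hφ x hx hxw],
    fun y hy hyu => ?_, by omega⟩
  simp only [hψ y hy hyu]
  omega

theorem disjoint_insert_v : Disjoint (insert S.v S.A) S.B :=
  disjoint_insert_left.mpr ⟨S.v_notMem_B, S.disjoint⟩

def matchingWithV (U : Finset V) : Finset (V × V) := S.M ∪ {S.v} ×ˢ U

theorem mem_matchingWithV {U : Finset V} (hU : U ⊆ S.B) :
    ∀ r ∈ S.matchingWithV U, r.1 ∈ insert S.v S.A ∧ r.2 ∈ S.B := by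
  simp only [matchingWithV, mem_union, mem_product, mem_singleton]
  rintro r (hr | ⟨hr, hr'⟩)
  · exact ⟨mem_insert_of_mem (S.mem_of_mem_M r hr).1, (S.mem_of_mem_M r hr).2⟩
  · exact ⟨hr ▸ mem_insert_self _ _, hU hr'⟩

theorem v_mem_matchingWithV_iff {U : Finset V} {b : V} :
    (S.v, b) ∈ S.matchingWithV U ↔ b ∈ U := by
  simp only [matchingWithV, mem_union, mem_product, mem_singleton, true_and]
  exact or_iff_right fun h => S.v_notMem_A (S.mem_of_mem_M _ h).1

theorem mem_matchingWithV_iff_of_mem_A {U : Finset V} {a b : V} (ha : a ∈ S.A) :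
    (a, b) ∈ S.matchingWithV U ↔ (a, b) ∈ S.M := by
  simp [matchingWithV, (S.ne_v_of_mem_A ha).symm]

namespace IsPotential

variable {S} {ψ : V → ℤ}

theorem eq_zero_or_eq_one (hP : S.IsPotential 0 ψ 0) {b : V} (hb : b ∈ S.B) :
    ψ b = 0 ∨ ψ b = 1 := by
  have hw (a) (ha : a ∈ S.A) : S.weight a b = ψ b := by simpa using hP.weight_eq a ha b hb
  have h2 : ψ b ≠ 2 := fun h2 =>
    S.not_forall_weight_eq_two_left b b fun a ha _ => (hw a ha).trans h2
  obtain ⟨a, ha⟩ := card_pos.mp (by linarith [S.five_le_card_A] : 0 < S.A.card)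
  have := S.weight_nonneg a b; have := S.weight_le_two a b
  rw [hw a ha] at *
  omega

theorem link_eq_one_iff_isABMEdge (hP : S.IsPotential 0 ψ 0) {p q : V} (hpq : p ≠ q)
    (hp : p ≠ S.v) (hq : q ≠ S.v) :
    S.link p q = 1 ↔ IsABMEdge (insert S.v S.A) S.B
      (S.matchingWithV (S.B.filter (ψ · = 0))) {S.v, p, q} := by
  have hM' := S.mem_matchingWithV (filter_subset (ψ · = 0) S.B)
  have hvM {b : V} (hb : b ∈ S.B) :
      (S.v, b) ∈ S.matchingWithV (S.B.filter (ψ · = 0)) ↔ ψ b = 0 := by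
    rw [S.v_mem_matchingWithV_iff, mem_filter, and_iff_right hb]
  have cross {a b : V} (ha : a ∈ S.A) (hb : b ∈ S.B) : S.link a b = 1 ↔
      IsABMEdge (insert S.v S.A) S.B (S.matchingWithV (S.B.filter (ψ · = 0))) {S.v, a, b} := by
    rw [isABMEdge_AAB_iff S.disjoint_insert_v hM' (mem_insert_self _ _) (mem_insert_of_mem ha) hb,
      hvM hb, S.mem_matchingWithV_iff_of_mem_A ha, ← S.m_eq_one_iff]
    have := hP.weight_eq a ha b hb
    have := hP.eq_zero_or_eq_one hb
    have := S.link_nonneg a b; have := S.m_nonneg a b; have := S.m_le_one a b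
    simp only [weight, Pi.zero_apply] at *
    omega
  rcases S.mem_A_or_mem_B hp with hp | hp <;> rcases S.mem_A_or_mem_B hq with hq | hq
  · refine iff_of_false (by simp [hP.link_A p hp q hq hpq])
      (not_isABMEdge_of_subset S.disjoint_insert_v ?_)
    simp [insert_subset_iff, hp, hq]
  · exact cross hp hq
  · rw [S.link_comm, pair_comm]
    exact cross hq hp
  · rw [isABMEdge_ABB_iff S.disjoint_insert_v hM' (mem_insert_self _ _) hp hq, hvM hp, hvM hq]
    have := hP.link_B p hp q hq hpq
    have := hP.eq_zero_or_eq_one hp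
    have := hP.eq_zero_or_eq_one hq
    omega

theorem isExtendable (hP : S.IsPotential 0 ψ 0) : S.IsExtendable := by
  have hU : (S.B.filter (ψ · = 0)).card ≤ 1 := card_le_one.mpr fun b hb b' hb' => by
    rw [mem_filter] at hb hb'
    by_contra hbb'
    have := hP.link_B b hb.1 b' hb'.1 hbb'
    have := S.link_nonneg b b'
    omega
  have hUM : ∀ p ∈ S.M, p.2 ∉ S.B.filter (ψ · = 0) := fun p hp hpU => by
    have := hP.weight_eq p.1 (S.mem_of_mem_M p hp).1 p.2 (mem_filter.mp hpU).1
    have := S.m_eq_one_iff.mpr hp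
    have := S.link_nonneg p.1 p.2
    simp only [weight, Pi.zero_apply, (mem_filter.mp hpU).2] at *
    omega
  refine ⟨insert S.v S.A, S.B, S.matchingWithV (S.B.filter (ψ · = 0)), subset_insert _ _,
    subset_rfl, subset_union_left, ?_, S.disjoint_insert_v,
    S.mem_matchingWithV (filter_subset _ _), S.isMatching.union_singleton_product hU
      (fun p hp => S.ne_v_of_mem_A (S.mem_of_mem_M p hp).1) hUM, fun e he => ?_⟩
  · rw [insert_union, S.union_eq, insert_erase (mem_univ _)]
  by_cases hv : S.v ∈ e
  · obtain ⟨p, q, hpq, hp, hq, rfl⟩ := exists_eq_insert_pair_of_card_eq_three he hv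
    rw [← S.link_eq_one_iff]
    exact hP.link_eq_one_iff_isABMEdge hpq hp hq
  · rw [S.mem_iff e he hv, matchingWithV, isABMEdge_insert_union_iff hv]

end IsPotential

theorem isExtendable_of_link_B (h : ∃ b ∈ S.B, ∃ b' ∈ S.B, b ≠ b' ∧ S.link b b' = 1) :
    S.IsExtendable := by
  obtain ⟨φ, ψ, k, w, u, hP, hφ, hψ, hk⟩ := S.exists_isPotential_normalized
  obtain rfl : k = 0 := by
    refine hk.resolve_right fun hk1 => ?_
    subst hk1
    obtain ⟨b, hb, b', hb', hbb', hl⟩ := h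
    have hsum := hP.link_B b hb b' hb' hbb'
    -- a link edge inside `B` forces `ψ = 2` at one end, which is then matched to all of `A \ {w}`
    obtain ⟨c, hc, hψc⟩ : ∃ c ∈ S.B, ψ c = 2 := by
      by_cases hbu : b = u
      · rw [hψ b' hb' fun h => hbb' (hbu.trans h.symm)] at hsum
        exact ⟨b, hb, by omega⟩
      · rw [hψ b hb hbu] at hsum
        exact ⟨b', hb', by omega⟩
    exact S.not_forall_weight_eq_two_left c w fun a ha haw => by
      rw [hP.weight_eq a ha c hc, hφ a ha haw, hψc]; rfl
  refine (hP.zero_left fun a ha => ?_).isExtendable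
  rcases ne_or_eq a w with haw | rfl
  · exact hφ a ha haw
  obtain ⟨a', ha', ha'a⟩ := exists_mem_ne (by linarith [S.five_le_card_A] : 1 < S.A.card) a
  have hl := hP.link_A a ha a' ha' ha'a.symm
  rw [hφ a' ha' ha'a] at hl
  have := S.link_nonneg a a'
  have := S.link_le_one a a'
  by_contra hne
  exact S.not_forall_weight_eq_two_right a u fun b hb hbu => by
    rw [hP.weight_eq a ha b hb, hψ b hb hbu]
    omega

theorem isExtendable : S.IsExtendable := by
  rcases S.exists_link_eq_one_in_B_or_A with hB | hA
  · exact S.isExtendable_of_link_B hB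
  · exact IsExtendable.of_swap S (S.swap.isExtendable_of_link_B hA)

end FFreeExtension

theorem stmt18_general {V : Type*} [DecidableEq V] [Fintype V]
    (G : Finset (Finset V))
    (hFfree : ∀ x x' y y' z z' : V, ([x, x', y, y', z, z'] : List V).Nodup →
      ((if ({x, y, z} : Finset V) ∈ G then (1 : ℤ) else 0)
        - (if ({x, y, z'} : Finset V) ∈ G then 1 else 0)
        - (if ({x, y', z} : Finset V) ∈ G then 1 else 0)
        - (if ({x', y, z} : Finset V) ∈ G then 1 else 0)
        + (if ({x, y', z'} : Finset V) ∈ G then 1 else 0)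
        + (if ({x', y, z'} : Finset V) ∈ G then 1 else 0)
        + (if ({x', y', z} : Finset V) ∈ G then 1 else 0)
        - (if ({x', y', z'} : Finset V) ∈ G then 1 else 0)) = 0)
    (v : V) (A B : Finset V) (M : Finset (V × V))
    (hpart : A ∪ B = Finset.univ.erase v) (hdisj : Disjoint A B)
    (hA : 5 ≤ A.card) (hB : 5 ≤ B.card)
    (hMAB : ∀ p ∈ M, p.1 ∈ A ∧ p.2 ∈ B)
    (hMdisj : ∀ p ∈ M, ∀ q ∈ M, p ≠ q → p.1 ≠ q.1 ∧ p.2 ≠ q.2)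
    (hGv : ∀ e : Finset V, e.card = 3 → v ∉ e →
      (e ∈ G ↔ ((e ∩ A).Nonempty ∧ (e ∩ B).Nonempty ∧
        ∀ p ∈ M, ¬(p.1 ∈ e ∧ p.2 ∈ e)))) :
    ∃ (A' B' : Finset V) (M' : Finset (V × V)),
      A ⊆ A' ∧ B ⊆ B' ∧ M ⊆ M' ∧
      A' ∪ B' = Finset.univ ∧ Disjoint A' B' ∧
      (∀ p ∈ M', p.1 ∈ A' ∧ p.2 ∈ B') ∧
      (∀ p ∈ M', ∀ q ∈ M', p ≠ q → p.1 ≠ q.1 ∧ p.2 ≠ q.2) ∧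
      ∀ e : Finset V, e.card = 3 →
        (e ∈ G ↔ ((e ∩ A').Nonempty ∧ (e ∩ B').Nonempty ∧
          ∀ p ∈ M', ¬(p.1 ∈ e ∧ p.2 ∈ e))) :=
  FFreeExtension.isExtendable ⟨G, v, A, B, M, hFfree, hpart, hdisj, hA, hB, hMAB, hMdisj, hGv⟩

/-- let `G` be an `𝓕`-free 3-graph (for every six distinct vertices the
signed sum of edge indicators vanishes), let `v` be a vertex, and suppose that `G - v`
equals `G_{A,B,M}` with `|A|, |B| ≥ 5` and `M ⊆ A × B` a set of pairwise disjoint pairs.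
Then `G = G_{A',B',M'}` for some partition `A' ⊇ A`, `B' ⊇ B` of the vertex set and some
set of pairwise disjoint pairs `M' ⊇ M` with `M' ⊆ A' × B'`. -/
theorem stmt18 {V : Type*} [DecidableEq V] [Fintype V]
    (G : Finset (Finset V)) (hG3 : ∀ e ∈ G, e.card = 3)
    (hFfree : ∀ x x' y y' z z' : V, ([x, x', y, y', z, z'] : List V).Nodup →
      ((if ({x, y, z} : Finset V) ∈ G then (1 : ℤ) else 0)
        - (if ({x, y, z'} : Finset V) ∈ G then 1 else 0)
        - (if ({x, y', z} : Finset V) ∈ G then 1 else 0)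
        - (if ({x', y, z} : Finset V) ∈ G then 1 else 0)
        + (if ({x, y', z'} : Finset V) ∈ G then 1 else 0)
        + (if ({x', y, z'} : Finset V) ∈ G then 1 else 0)
        + (if ({x', y', z} : Finset V) ∈ G then 1 else 0)
        - (if ({x', y', z'} : Finset V) ∈ G then 1 else 0)) = 0)
    (v : V) (A B : Finset V) (M : Finset (V × V))
    (hpart : A ∪ B = Finset.univ.erase v) (hdisj : Disjoint A B)
    (hA : 5 ≤ A.card) (hB : 5 ≤ B.card)
    (hMAB : ∀ p ∈ M, p.1 ∈ A ∧ p.2 ∈ B)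
    (hMdisj : ∀ p ∈ M, ∀ q ∈ M, p ≠ q → p.1 ≠ q.1 ∧ p.2 ≠ q.2)
    (hGv : ∀ e : Finset V, e.card = 3 → v ∉ e →
      (e ∈ G ↔ ((e ∩ A).Nonempty ∧ (e ∩ B).Nonempty ∧
        ∀ p ∈ M, ¬(p.1 ∈ e ∧ p.2 ∈ e)))) :
    ∃ (A' B' : Finset V) (M' : Finset (V × V)),
      A ⊆ A' ∧ B ⊆ B' ∧ M ⊆ M' ∧
      A' ∪ B' = Finset.univ ∧ Disjoint A' B' ∧
      (∀ p ∈ M', p.1 ∈ A' ∧ p.2 ∈ B') ∧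
      (∀ p ∈ M', ∀ q ∈ M', p ≠ q → p.1 ≠ q.1 ∧ p.2 ≠ q.2) ∧
      ∀ e : Finset V, e.card = 3 →
        (e ∈ G ↔ ((e ∩ A').Nonempty ∧ (e ∩ B').Nonempty ∧
          ∀ p ∈ M', ¬(p.1 ∈ e ∧ p.2 ∈ e))) :=
  stmt18_general G hFfree v A B M hpart hdisj hA hB hMAB hMdisj hGv
end
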